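/- arXiv:2412.03532 — 3 statements merged into one kernel-verified Lean document; each statement's English description precedes it below -/
import Mathlib

section
/- Let 𝔫 be a V-stability condition of degree d on a finite connected multigraph Γ. If W₁ and W₂ are disjoint subsets of V(Γ) such that W₁, W₂ and W₁ ∪ W₂ all belong to the extended degeneracy subset 𝒟̂(𝔫), then the extended V-function satisfies 𝔫_{W₁∪W₂} = 𝔫_{W₁} + 𝔫_{W₂} + val(W₁, W₂). -/
noncomputable section

attribute [local instance 10] Classical.propDecidable

/-- A finite multigraph on vertex type `V` with edge type `E`: each edge is given a
reference source and target vertex. Loops and multiple edges are allowed. -/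
structure Multigraph (V E : Type) where
  src : E → V
  tgt : E → V

/-- `A` is a disjoint union of elements of the class `D`. -/
def IsDisjUnionOf {V : Type} [DecidableEq V] (D : Set (Finset V)) (A : Finset V) : Prop :=
  ∃ C : Finset (Finset V), (∀ X ∈ C, X ∈ D) ∧
    (C : Set (Finset V)).Pairwise (fun X Y => Disjoint X Y) ∧ C.sup id = A

/-- An ordered partition of the vertex set: a list of nonempty, pairwise disjoint
subsets covering every vertex. -/
def IsOrdPart {V : Type} (L : List (Finset V)) : Prop :=
  (∀ A ∈ L, A.Nonempty) ∧ L.Pairwise (fun A B => Disjoint A B) ∧ ∀ v : V, ∃ A ∈ L, v ∈ A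

/-- The index of the part of `L` containing `v`. -/
def partIdx {V : Type} [DecidableEq V] (L : List (Finset V)) (v : V) : ℕ :=
  L.findIdx (fun A => decide (v ∈ A))

/-- The union of the first `i` parts of `L`. -/
def unionUpTo {V : Type} [DecidableEq V] (L : List (Finset V)) (i : ℕ) : Finset V :=
  (L.take i).foldr (· ∪ ·) ∅

/-- `D_W`, the total value of the divisor `Dv` on `W`. -/
def divSum {V : Type} [Fintype V] (Dv : V → ℤ) (W : Finset V) : ℤ := ∑ v ∈ W, Dv v

/-- `𝕆^d(Γ)`: pairs (removed edge set `S`, divisor of total degree `d - |S|`),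
representing the pair `(Γ∖S, D)`. -/
def OOset {V E : Type} [Fintype V] (d : ℤ) : Set (Finset E × (V → ℤ)) :=
  {p | divSum p.2 Finset.univ = d - (p.1.card : ℤ)}

/-- `𝒫(Γ∖S)` for a subset `P ⊆ 𝕆^d(Γ)`. -/
def PAt {V E : Type} (P : Set (Finset E × (V → ℤ))) (S : Finset E) : Set (V → ℤ) :=
  {Dv | (S, Dv) ∈ P}

namespace Multigraph

variable {V E V' E' : Type}
variable [Fintype V] [DecidableEq V] [Fintype E] [DecidableEq E]
variable [Fintype V'] [DecidableEq V'] [Fintype E'] [DecidableEq E']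
variable (G : Multigraph V E) (G' : Multigraph V' E')

/-- The number of edges in `T` joining `W₁` and `W₂`. -/
def valBtwIn (T : Finset E) (W₁ W₂ : Finset V) : ℕ :=
  (T.filter (fun e => (G.src e ∈ W₁ ∧ G.tgt e ∈ W₂) ∨ (G.src e ∈ W₂ ∧ G.tgt e ∈ W₁))).card

/-- `val(W₁, W₂)`: the number of edges of `Γ` joining `W₁` and `W₂`. -/
def valBtw (W₁ W₂ : Finset V) : ℕ := G.valBtwIn Finset.univ W₁ W₂

/-- `val(W) := val(W, Wᶜ)`. -/
def valOf (W : Finset V) : ℕ := G.valBtw W Wᶜ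

/-- `e_S(W)`: the number of edges in `S` with both endpoints in `W`. -/
def eIn (S : Finset E) (W : Finset V) : ℕ :=
  (S.filter (fun e => G.src e ∈ W ∧ G.tgt e ∈ W)).card

/-- The edges of the induced subgraph `Γ[W]`. -/
def edgesIn (W : Finset V) : Finset E :=
  Finset.univ.filter (fun e => G.src e ∈ W ∧ G.tgt e ∈ W)

/-- One-step adjacency inside the vertex set `W` using edges from `T`. -/
def Step (T : Finset E) (W : Finset V) (a b : V) : Prop :=
  a ∈ W ∧ b ∈ W ∧ ∃ e ∈ T, (G.src e = a ∧ G.tgt e = b) ∨ (G.src e = b ∧ G.tgt e = a)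

def Linked (T : Finset E) (W : Finset V) : V → V → Prop :=
  Relation.ReflTransGen (G.Step T W)

/-- The graph with vertex set `W` and those edges of `T` joining vertices of `W`
is nonempty and connected. -/
def IsConn (T : Finset E) (W : Finset V) : Prop :=
  W.Nonempty ∧ ∀ a ∈ W, ∀ b ∈ W, G.Linked T W a b

/-- `Con(Γ)`: nonempty subsets with connected induced subgraph. -/
def Con : Set (Finset V) := {W | G.IsConn Finset.univ W}

/-- `BCon(Γ)`: biconnected subsets. -/
def BCon : Set (Finset V) := {W | G.IsConn Finset.univ W ∧ G.IsConn Finset.univ Wᶜ}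

/-- The vertex set of the connected component of `v` in `(W, T)`. -/
def comp (T : Finset E) (W : Finset V) (v : V) : Finset V :=
  W.filter (fun u => G.Linked T W v u)

/-- The vertex sets of the connected components of `(W, T)`. -/
def comps (T : Finset E) (W : Finset V) : Finset (Finset V) :=
  W.image (G.comp T W)

/-- The vertex sets of the connected components of the spanning subgraph `Γ∖S`. -/
def compsRem (S : Finset E) : Finset (Finset V) := G.comps Sᶜ Finset.univ

/-- `W` is `𝔫`-degenerate. -/
def Degen (n : Finset V → ℤ) (d : ℤ) (W : Finset V) : Prop :=
  n W + n Wᶜ + (G.valOf W : ℤ) - d = 0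

/-- `W ∈ 𝒟(𝔫)`: a biconnected `𝔫`-degenerate subset. -/
def InDeg (n : Finset V → ℤ) (d : ℤ) (W : Finset V) : Prop :=
  W ∈ G.BCon ∧ G.Degen n d W

def triSum (n : Finset V → ℤ) (d : ℤ) (W₁ W₂ W₃ : Finset V) : ℤ :=
  n W₁ + n W₂ + n W₃ + (G.valBtw W₁ W₂ : ℤ) + (G.valBtw W₁ W₃ : ℤ) +
    (G.valBtw W₂ W₃ : ℤ) - d

/-- A V-stability condition of degree `d` on `Γ` (the values of `n` outside
`BCon(Γ)` are irrelevant). -/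
structure IsVStab (d : ℤ) (n : Finset V → ℤ) : Prop where
  one : ∀ W ∈ G.BCon,
    n W + n Wᶜ + (G.valOf W : ℤ) - d = 0 ∨ n W + n Wᶜ + (G.valOf W : ℤ) - d = 1
  two_deg : ∀ W₁ W₂ W₃ : Finset V, W₁ ∈ G.BCon → W₂ ∈ G.BCon → W₃ ∈ G.BCon →
    Disjoint W₁ W₂ → Disjoint W₁ W₃ → Disjoint W₂ W₃ → W₁ ∪ W₂ ∪ W₃ = Finset.univ →
    ((G.Degen n d W₁ → G.Degen n d W₂ → G.Degen n d W₃) ∧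
     (G.Degen n d W₁ → G.Degen n d W₃ → G.Degen n d W₂) ∧
     (G.Degen n d W₂ → G.Degen n d W₃ → G.Degen n d W₁))
  two_sum : ∀ W₁ W₂ W₃ : Finset V, W₁ ∈ G.BCon → W₂ ∈ G.BCon → W₃ ∈ G.BCon →
    Disjoint W₁ W₂ → Disjoint W₁ W₃ → Disjoint W₂ W₃ → W₁ ∪ W₂ ∪ W₃ = Finset.univ →
    ((¬ G.Degen n d W₁ ∧ ¬ G.Degen n d W₂ ∧ ¬ G.Degen n d W₃ →
        G.triSum n d W₁ W₂ W₃ = 1 ∨ G.triSum n d W₁ W₂ W₃ = 2) ∧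
     ((G.Degen n d W₁ ∧ ¬ G.Degen n d W₂ ∧ ¬ G.Degen n d W₃) ∨
      (¬ G.Degen n d W₁ ∧ G.Degen n d W₂ ∧ ¬ G.Degen n d W₃) ∨
      (¬ G.Degen n d W₁ ∧ ¬ G.Degen n d W₂ ∧ G.Degen n d W₃) →
        G.triSum n d W₁ W₂ W₃ = 1) ∧
     (G.Degen n d W₁ ∧ G.Degen n d W₂ ∧ G.Degen n d W₃ → G.triSum n d W₁ W₂ W₃ = 0))

/-- The extended degeneracy subset associated to an abstract class `D` of subsets:
`V(Γ)` together with the connected `W` all of whose complementary components lie in `D`. -/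
def ExtOf (D : Set (Finset V)) : Set (Finset V) :=
  {W | W = Finset.univ ∨ (W ∈ G.Con ∧ ∀ C ∈ G.comps Finset.univ Wᶜ, C ∈ D)}

/-- `𝒟̂(𝔫)`, the extended degeneracy subset of a V-stability. -/
def ExtDeg (n : Finset V → ℤ) (d : ℤ) : Set (Finset V) :=
  G.ExtOf {W | G.InDeg n d W}

/-- The value of the extended V-function on a connected subset. -/
def connVal (n : Finset V → ℤ) (d : ℤ) (W : Finset V) : ℤ :=
  d - (∑ C ∈ G.comps Finset.univ Wᶜ, n C) - (G.valOf W : ℤ) +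
    (((G.comps Finset.univ Wᶜ).filter (fun C => ¬ G.InDeg n d C)).card : ℤ)

/-- The extended V-function of `𝔫`, defined on all subsets of `V(Γ)`. -/
def extendV (n : Finset V → ℤ) (d : ℤ) (W : Finset V) : ℤ :=
  ∑ C ∈ G.comps Finset.univ W, G.connVal n d C

/-- The head (target) of the edge `e` under the orientation datum `o`. -/
def orientHead (o : E → Bool) (e : E) : V := if o e then G.tgt e else G.src e

/-- `D(𝒪)` for the partial orientation given by the edges `A` oriented by `o`. -/
def divOrient (A : Finset E) (o : E → Bool) : V → ℤ :=
  fun v => ((A.filter (fun e => G.orientHead o e = v)).card : ℤ)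

/-- `p ≥ q` in `𝕆(Γ)`. -/
def OOge (p q : Finset E × (V → ℤ)) : Prop :=
  p.1 ⊆ q.1 ∧ ∃ o : E → Bool, q.2 = p.2 - G.divOrient (q.1 \ p.1) o

/-- `P` is an upper subset of `𝕆^d(Γ)`. -/
def IsUpper (d : ℤ) (P : Set (Finset E × (V → ℤ))) : Prop :=
  P ⊆ OOset d ∧ ∀ p ∈ OOset d, ∀ q ∈ P, G.OOge p q → p ∈ P

/-- The semistable set `𝒫_𝔫 ⊆ 𝕆^d(Γ)` of a V-stability condition. -/
def Pss (n : Finset V → ℤ) (d : ℤ) : Set (Finset E × (V → ℤ)) :=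
  {p | p ∈ OOset d ∧ ∀ W ∈ G.BCon, n W ≤ divSum p.2 W + (G.eIn p.1 W : ℤ)}

/-- `𝒫_𝔫(Γ∖S)`. -/
def PssAt (n : Finset V → ℤ) (d : ℤ) (S : Finset E) : Set (V → ℤ) :=
  {Dv | (S, Dv) ∈ G.Pss n d}

/-- The polystable set `𝒫^{ps}_𝔫`. -/
def Pps (n : Finset V → ℤ) (d : ℤ) : Set (Finset E × (V → ℤ)) :=
  {p | p ∈ G.Pss n d ∧ ∀ W, G.InDeg n d W →
    divSum p.2 W + (G.eIn p.1 W : ℤ) = n W →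
    ∀ e : E, ¬ (G.src e ∈ W ↔ G.tgt e ∈ W) → e ∈ p.1}

/-- `𝒫^{ps}_𝔫(Γ∖S)`. -/
def PpsAt (n : Finset V → ℤ) (d : ℤ) (S : Finset E) : Set (V → ℤ) :=
  {Dv | (S, Dv) ∈ G.Pps n d}

/-- A degeneracy subset for `Γ`. -/
structure IsDegSubset (D : Set (Finset V)) : Prop where
  subset : ∀ W ∈ D, W ∈ G.BCon
  compl : ∀ W ∈ D, Wᶜ ∈ D
  union : ∀ W₁ W₂ : Finset V, W₁ ∈ D → W₂ ∈ D → Disjoint W₁ W₂ →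
    W₁ ∪ W₂ ∈ G.BCon → W₁ ∪ W₂ ∈ D

/-- The spanning subgraph `Γ∖S` is `D`-admissible. -/
def AdmRem (D : Set (Finset V)) (S : Finset E) : Prop :=
  ∀ C ∈ G.compsRem S, C ∈ G.ExtOf D

/-- `b₀(Γ∖S)`: the number of connected components of `Γ∖S`. -/
def b0Rem (S : Finset E) : ℕ := (G.compsRem S).card

/-- The spanning subgraph `Γ∖S` is a forest. -/
def ForestRem (S : Finset E) : Prop :=
  Sᶜ.card + G.b0Rem S = Fintype.card V

/-- `Γ∖S` is a minimal `D`-admissible spanning subgraph. -/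
def MinAdm (D : Set (Finset V)) (S : Finset E) : Prop :=
  G.AdmRem D S ∧ ∀ S' : Finset E, S ⊆ S' → G.AdmRem D S' → S' = S

/-- The `D`-complexity of `Γ∖S`: the number of `D`-admissible spanning forests of `Γ`
contained in `Γ∖S`. -/
def cD (D : Set (Finset V)) (S : Finset E) : ℕ :=
  ((Finset.univ : Finset (Finset E)).filter
    (fun F => S ⊆ F ∧ G.ForestRem F ∧ G.AdmRem D F)).card

/-- `b₁(Γ)`, the first Betti number of `Γ`. -/
def b1 : ℤ := (Fintype.card E : ℤ) - (Fintype.card V : ℤ) + (G.b0Rem ∅ : ℤ)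

/-- A `D`-forest function of degree `d` (encoded as a total function whose values
matter only on the minimal `D`-admissible spanning subgraphs). -/
def IsForestFun (D : Set (Finset V)) (d : ℤ) (I : Finset E → (V → ℤ)) : Prop :=
  ∀ S, G.MinAdm D S → divSum (I S) Finset.univ = d - G.b1 - (G.b0Rem S : ℤ) + 1

/-- `𝕆^d_D(Γ)`. -/
def OOD (D : Set (Finset V)) (d : ℤ) : Set (Finset E × (V → ℤ)) :=
  {p | p ∈ OOset d ∧ G.AdmRem D p.1}

/-- `P` is an upper subset of `𝕆^d_D(Γ)`. -/
def IsUpperD (D : Set (Finset V)) (d : ℤ) (P : Set (Finset E × (V → ℤ))) : Prop :=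
  P ⊆ G.OOD D d ∧ ∀ p ∈ G.OOD D d, ∀ q ∈ P, G.OOge p q → p ∈ P

/-- The BD-set of a forest function: the smallest upper subset of `𝕆^d_D(Γ)`
containing all the pairs `(F, I(F))` for `F` a minimal `D`-admissible spanning
subgraph. -/
def BDset (D : Set (Finset V)) (d : ℤ) (I : Finset E → (V → ℤ)) :
    Set (Finset E × (V → ℤ)) :=
  ⋂₀ {P | G.IsUpperD D d P ∧ ∀ S, G.MinAdm D S → (S, I S) ∈ P}

/-- `BD_I(Γ∖S)`. -/
def BDAt (D : Set (Finset V)) (d : ℤ) (I : Finset E → (V → ℤ)) (S : Finset E) :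
    Set (V → ℤ) :=
  {Dv | (S, Dv) ∈ G.BDset D d I}

/-- The divergence (chip-firing) of the function `f` on the subgraph with edge set `T`. -/
def divT (T : Finset E) (f : V → ℤ) : V → ℤ := fun v =>
  ∑ e ∈ T, ((if G.tgt e = v then f (G.src e) - f (G.tgt e) else 0) +
            (if G.src e = v then f (G.tgt e) - f (G.src e) else 0))

/-- Two divisors are chip-firing equivalent on `Γ∖S`, i.e. their difference is a
principal divisor of `Γ∖S`; equivalently `π_{Γ∖S}(D₁) = π_{Γ∖S}(D₂)` in `Pic(Γ∖S)`. -/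
def ChipEq (S : Finset E) (D₁ D₂ : V → ℤ) : Prop :=
  ∃ f : V → ℤ, D₂ = D₁ + G.divT Sᶜ f

/-- `E_G(V_•)`: the edges of the subgraph with edge set `T` joining two distinct
parts of the ordered partition `L`. -/
def crossEdges (T : Finset E) (L : List (Finset V)) : Finset E :=
  T.filter (fun e => partIdx L (G.src e) ≠ partIdx L (G.tgt e))

/-- `D(𝒪_G(V_•))`: the outgoing divisor of the partial orientation induced by the
ordered partition `L` on the subgraph with edge set `T` (each crossing edge is
oriented from the lower-indexed part towards the higher-indexed part). -/
def divOP (T : Finset E) (L : List (Finset V)) : V → ℤ := fun v =>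
  ((T.filter (fun e =>
      (G.tgt e = v ∧ partIdx L (G.src e) < partIdx L (G.tgt e)) ∨
      (G.src e = v ∧ partIdx L (G.tgt e) < partIdx L (G.src e)))).card : ℤ)

/-- Condition (a) of the definition of a PT-assignment at the spanning subgraph `Γ∖S`:
the map `π` from `P(Γ∖S)` to the Picard group surjects onto `Pic^δ` for some degree
assignment `δ` on the components with total sum `d - |S|`. -/
def PTcondA (d : ℤ) (P : Set (Finset E × (V → ℤ))) (S : Finset E) : Prop :=
  ∃ δ : Finset V → ℤ, (∑ C ∈ G.compsRem S, δ C) = d - (S.card : ℤ) ∧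
    ∀ D' : V → ℤ, (∀ C ∈ G.compsRem S, divSum D' C = δ C) →
      ∃ D₀ ∈ PAt P S, G.ChipEq S D₀ D'

/-- Condition (b) of the definition of a PT-assignment at the spanning subgraph `Γ∖S`. -/
def PTcondB (D : Set (Finset V)) (P : Set (Finset E × (V → ℤ))) (S : Finset E) : Prop :=
  ∀ D₁ ∈ PAt P S, ∀ D₂ ∈ PAt P S, G.ChipEq S D₁ D₂ →
    ∃ L : List (Finset V), IsOrdPart L ∧
      (∀ A ∈ L, IsDisjUnionOf (G.ExtOf D) A) ∧
      D₁ - G.divOP Sᶜ L = D₂ - G.divOP Sᶜ L.reverse ∧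
      (D₁ - G.divOP Sᶜ L) ∈ PAt P (S ∪ G.crossEdges Sᶜ L)

/-- The subposet `S_{Γ∖S₀}(P)`: spanning subgraphs of the form `(Γ∖S₀)∖E(W_•)` on
which `P` is nonempty. -/
def SOf (P : Set (Finset E × (V → ℤ))) (S₀ S : Finset E) : Prop :=
  (∃ L : List (Finset V), IsOrdPart L ∧ S = S₀ ∪ G.crossEdges S₀ᶜ L) ∧
    (PAt P S).Nonempty

/-- `P` is a PT-assignment of degree `d` with degeneracy subset `D`. -/
def IsPT (D : Set (Finset V)) (d : ℤ) (P : Set (Finset E × (V → ℤ))) : Prop :=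
  G.IsUpperD D d P ∧ ∀ S, G.AdmRem D S → G.PTcondA d P S ∧ G.PTcondB D P S

/-- `P` is a numerical PT-assignment of degree `d` with degeneracy subset `D`. -/
def IsNumPT (D : Set (Finset V)) (d : ℤ) (P : Set (Finset E × (V → ℤ))) : Prop :=
  G.IsUpperD D d P ∧ ∀ S, G.AdmRem D S → (PAt P S).ncard = G.cD D S

/-- `P` is a weak PT-assignment of degree `d` with degeneracy subset `D`. -/
def IsWeakPT (D : Set (Finset V)) (d : ℤ) (P : Set (Finset E × (V → ℤ))) : Prop :=
  G.IsUpperD D d P ∧ ∀ S, G.SOf P ∅ S → G.PTcondA d P S ∧ G.PTcondB D P S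

/-- `P` is a weak numerical PT-assignment of degree `d` with degeneracy subset `D`. -/
def IsWeakNumPT (D : Set (Finset V)) (d : ℤ) (P : Set (Finset E × (V → ℤ))) : Prop :=
  G.IsUpperD D d P ∧ (PAt P ∅).ncard = G.cD D ∅

/-- The subgraph of `Γ` with vertex set `U` and those edges of `T` lying inside `U`,
regarded as a multigraph in its own right. -/
def subMG (U : Finset V) (T : Finset E) :
    Multigraph {v // v ∈ U} {e // e ∈ T ∩ G.edgesIn U} where
  src e := ⟨G.src e.1, (Finset.mem_filter.mp (Finset.mem_inter.mp e.2).2).2.1⟩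
  tgt e := ⟨G.tgt e.1, (Finset.mem_filter.mp (Finset.mem_inter.mp e.2).2).2.2⟩

/-- The subgraph of `(W, T)` induced on `W` is a (spanning) forest of `Γ[W]`. -/
def ForestOn (W : Finset V) (T : Finset E) : Prop :=
  (T ∩ G.edgesIn W).card + (G.comps T W).card = W.card

/-- The minimal `D`-admissible spanning subgraph `Γ∖R` is adapted to `W`. -/
def AdaptedTo (D : Set (Finset V)) (R : Finset E) (W : Finset V) : Prop :=
  G.MinAdm D R ∧ G.ForestOn W Rᶜ ∧ G.ForestOn Wᶜ Rᶜ ∧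
    G.valBtwIn Rᶜ W Wᶜ = (if W ∈ D then 0 else 1)

/-- The quantity `I(F)_W + b₁(Γ[W]) + b₀(F[W]) - 1` defining `𝔫^I_W` from a forest
function `I`, computed using the minimal admissible spanning subgraph `Γ∖R`. -/
def nOfI (I : Finset E → (V → ℤ)) (R : Finset E) (W : Finset V) : ℤ :=
  divSum (I R) W + ((G.edgesIn W).card : ℤ) - (W.card : ℤ) +
    ((G.comps Finset.univ W).card : ℤ) + ((G.comps Rᶜ W).card : ℤ) - 1

/-- The defining conditions for the divisor `I_𝔫(F)` at a minimal admissible spanning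
subgraph `F = Γ∖R`: on the vertex set of each connected component `F_i` of `F` the
divisor has total value `|𝔫(F_i)|`, and for each edge `e` of `F`, on each of the two
pieces in which `e` splits its component, it has total value given by the restricted
V-stability `𝔫(F_{i_e})`. -/
def ForestDivCond (n : Finset V → ℤ) (d : ℤ) (R : Finset E) (Dv : V → ℤ) : Prop :=
  (∀ C ∈ G.compsRem R, divSum Dv C = G.extendV n d C - ((R ∩ G.edgesIn C).card : ℤ)) ∧
  ∀ e ∈ Rᶜ,
    (divSum Dv (G.comp (Rᶜ \ {e}) Finset.univ (G.src e)) =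
      G.extendV n d (G.comp (Rᶜ \ {e}) Finset.univ (G.src e)) -
        (G.eIn (R ∩ G.edgesIn (G.comp Rᶜ Finset.univ (G.src e)))
          (G.comp (Rᶜ \ {e}) Finset.univ (G.src e)) : ℤ)) ∧
    (divSum Dv (G.comp (Rᶜ \ {e}) Finset.univ (G.tgt e)) =
      G.extendV n d (G.comp (Rᶜ \ {e}) Finset.univ (G.tgt e)) -
        (G.eIn (R ∩ G.edgesIn (G.comp Rᶜ Finset.univ (G.src e)))
          (G.comp (Rᶜ \ {e}) Finset.univ (G.tgt e)) : ℤ))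

/-- A morphism of graphs `f : Γ → Γ'` (a contraction of a set of edges followed by an
isomorphism): it is given by a map on vertices and an injective pullback map on
edges; non-contracted edges have matching endpoints, contracted edges have their two
endpoints identified, and each fiber over a vertex of `Γ'` is nonempty and connected
via contracted edges. -/
structure Hom where
  fV : V → V'
  fE : E' → E
  fE_inj : Function.Injective fE
  ends : ∀ e' : E',
    (fV (G.src (fE e')) = G'.src e' ∧ fV (G.tgt (fE e')) = G'.tgt e') ∨
    (fV (G.src (fE e')) = G'.tgt e' ∧ fV (G.tgt (fE e')) = G'.src e')
  contr : ∀ e : E, (∀ e' : E', fE e' ≠ e) → fV (G.src e) = fV (G.tgt e)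
  fibers : ∀ v' : V', G.IsConn (Finset.univ.filter (fun e => ∀ e' : E', fE e' ≠ e))
      (Finset.univ.filter (fun v => fV v = v'))

variable {G G'}

/-- `f_V^{-1}(Z)`. -/
def Hom.preV (f : G.Hom G') (Z : Finset V') : Finset V :=
  Finset.univ.filter (fun v => f.fV v ∈ Z)

/-- The set of edges contracted by `f`. -/
def Hom.contracted (f : G.Hom G') : Finset E :=
  Finset.univ.filter (fun e => ∀ e' : E', f.fE e' ≠ e)

/-- The push-forward `f_* : 𝕆^d(Γ) → 𝕆^d(Γ')`. -/
def Hom.pushO (f : G.Hom G') (p : Finset E × (V → ℤ)) : Finset E' × (V' → ℤ) :=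
  (Finset.univ.filter (fun e' => f.fE e' ∈ p.1),
   fun v' => divSum p.2 (f.preV {v'}) + (G.eIn (p.1 ∩ f.contracted) (f.preV {v'}) : ℤ))

end Multigraph

/-- The cycle multigraph `C_n`, with vertices `v_i` for `i ∈ Fin n` and edges `e_i`
joining `v_i` and `v_{i+1}` (indices mod `n`). -/
def cycleMG (n : ℕ) [NeZero n] : Multigraph (Fin n) (Fin n) :=
  ⟨fun i => i, fun i => i + 1⟩

/-- The cyclic interval `V_{ij} = {v_{i+1}, …, v_j}` of vertices of the cycle `C_n`. -/
def Vij {n : ℕ} [NeZero n] (i j : Fin n) : Finset (Fin n) :=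
  Finset.univ.filter (fun v => 1 ≤ (v - i).val ∧ (v - i).val ≤ (j - i).val)

set_option linter.unusedSectionVars false

section Aux

namespace Multigraph

variable {V E : Type} [Fintype V] [DecidableEq V] [Fintype E] [DecidableEq E]
variable {G : Multigraph V E}

lemma step_symm {T : Finset E} {W : Finset V} {a b : V} (h : G.Step T W a b) :
    G.Step T W b a :=
  ⟨h.2.1, h.1, by obtain ⟨e, he, h'⟩ := h.2.2; exact ⟨e, he, h'.symm⟩⟩

lemma linked_symm {T : Finset E} {W : Finset V} {a b : V} (h : G.Linked T W a b) :
    G.Linked T W b a :=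
  by haveI : Std.Symm (G.Step T W) := ⟨fun _ _ h' => step_symm h'⟩; exact Std.Symm.symm (r := Relation.ReflTransGen (G.Step T W)) _ _ h

lemma linked_trans {T : Finset E} {W : Finset V} {a b c : V} (h1 : G.Linked T W a b)
    (h2 : G.Linked T W b c) : G.Linked T W a c :=
  Relation.ReflTransGen.trans h1 h2

lemma linked_mono {T : Finset E} {W W' : Finset V} (hW : W ⊆ W') {a b : V}
    (h : G.Linked T W a b) : G.Linked T W' a b := by
  refine Relation.ReflTransGen.mono ?_ _ _ h
  rintro x y ⟨hx, hy, he⟩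
  exact ⟨hW hx, hW hy, he⟩

lemma mem_comp {T : Finset E} {W : Finset V} {v u : V} :
    u ∈ G.comp T W v ↔ u ∈ W ∧ G.Linked T W v u := Finset.mem_filter

lemma comp_subset {T : Finset E} {W : Finset V} {v : V} : G.comp T W v ⊆ W :=
  Finset.filter_subset _ _

lemma mem_comp_self {T : Finset E} {W : Finset V} {v : V} (hv : v ∈ W) :
    v ∈ G.comp T W v := mem_comp.mpr ⟨hv, Relation.ReflTransGen.refl⟩

lemma comp_eq_of_mem {T : Finset E} {W : Finset V} {v u : V} (h : u ∈ G.comp T W v) :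
    G.comp T W u = G.comp T W v := by
  have hl : G.Linked T W v u := (mem_comp.mp h).2
  ext w
  simp only [mem_comp]
  exact ⟨fun hw => ⟨hw.1, linked_trans hl hw.2⟩,
    fun hw => ⟨hw.1, linked_trans (linked_symm hl) hw.2⟩⟩

lemma mem_comps {T : Finset E} {W : Finset V} {C : Finset V} :
    C ∈ G.comps T W ↔ ∃ v ∈ W, G.comp T W v = C := Finset.mem_image

lemma comp_mem_comps {T : Finset E} {W : Finset V} {v : V} (hv : v ∈ W) :
    G.comp T W v ∈ G.comps T W := mem_comps.mpr ⟨v, hv, rfl⟩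

lemma comps_nonempty {T : Finset E} {W : Finset V} {C : Finset V}
    (h : C ∈ G.comps T W) : C.Nonempty := by
  obtain ⟨v, hv, rfl⟩ := mem_comps.mp h
  exact ⟨v, mem_comp_self hv⟩

lemma comps_subset {T : Finset E} {W : Finset V} {C : Finset V}
    (h : C ∈ G.comps T W) : C ⊆ W := by
  obtain ⟨v, hv, rfl⟩ := mem_comps.mp h
  exact comp_subset

lemma comps_disjoint {T : Finset E} {W : Finset V} {C C' : Finset V}
    (h : C ∈ G.comps T W) (h' : C' ∈ G.comps T W) (hne : C ≠ C') : Disjoint C C' := by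
  rw [Finset.disjoint_left]
  intro x hx hx'
  obtain ⟨v, hv, rfl⟩ := mem_comps.mp h
  obtain ⟨v', hv', rfl⟩ := mem_comps.mp h'
  exact hne ((comp_eq_of_mem hx).symm.trans (comp_eq_of_mem hx'))

lemma linked_stay {T : Finset E} {W : Finset V} {v u : V} (h : G.Linked T W v u) :
    G.Linked T (G.comp T W v) v u := by
  unfold Linked at h ⊢
  induction h with
  | refl => exact Relation.ReflTransGen.refl
  | tail h1 h2 ih =>
      rename_i b c
      have hb : b ∈ G.comp T W v := mem_comp.mpr ⟨h2.1, h1⟩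
      have hc : c ∈ G.comp T W v := mem_comp.mpr ⟨h2.2.1, Relation.ReflTransGen.tail h1 h2⟩
      exact Relation.ReflTransGen.tail ih ⟨hb, hc, h2.2.2⟩

lemma isConn_comp {T : Finset E} {W : Finset V} {v : V} (hv : v ∈ W) :
    G.IsConn T (G.comp T W v) := by
  refine ⟨⟨v, mem_comp_self hv⟩, ?_⟩
  intro a ha b hb
  have h1 : G.Linked T (G.comp T W v) v a := linked_stay (mem_comp.mp ha).2
  have h2 : G.Linked T (G.comp T W v) v b := linked_stay (mem_comp.mp hb).2
  exact linked_trans (linked_symm h1) h2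

lemma comps_sup (T : Finset E) (W : Finset V) : (G.comps T W).sup id = W := by
  apply Finset.Subset.antisymm
  · show (G.comps T W).sup id ≤ W
    refine Finset.sup_le fun C hC => ?_
    obtain ⟨v, hv, rfl⟩ := mem_comps.mp hC
    exact comp_subset
  · intro v hv
    have h1 : G.comp T W v ≤ (G.comps T W).sup id :=
      Finset.le_sup (f := id) (comp_mem_comps (G := G) (T := T) hv)
    exact h1 (mem_comp_self hv)

lemma comp_eq_of_subset {T : Finset E} {W W' : Finset V} (hsub : W' ⊆ W) {v : V}
    (hv : G.comp T W v ⊆ W') : G.comp T W' v = G.comp T W v := by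
  apply Finset.Subset.antisymm
  · intro u hu
    obtain ⟨hu1, hu2⟩ := mem_comp.mp hu
    exact mem_comp.mpr ⟨hsub hu1, linked_mono hsub hu2⟩
  · intro u hu
    obtain ⟨hu1, hu2⟩ := mem_comp.mp hu
    exact mem_comp.mpr ⟨hv hu, linked_mono hv (linked_stay hu2)⟩

lemma comps_eq_singleton {T : Finset E} {W : Finset V} (h : G.IsConn T W) :
    G.comps T W = {W} := by
  obtain ⟨⟨v, hv⟩, hconn⟩ := h
  have hcomp : ∀ u ∈ W, G.comp T W u = W := by
    intro u hu
    apply Finset.Subset.antisymm comp_subset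
    intro w hw
    exact mem_comp.mpr ⟨hw, hconn u hu w hw⟩
  ext C
  simp only [mem_comps, Finset.mem_singleton]
  constructor
  · rintro ⟨u, hu, rfl⟩; exact hcomp u hu
  · rintro rfl; exact ⟨v, hv, hcomp v hv⟩

lemma exists_cross {T : Finset E} {W : Finset V} {a b : V} {S : Finset V}
    (h : G.Linked T W a b) (ha : a ∈ S) (hb : b ∉ S) :
    ∃ e ∈ T, ((G.src e ∈ S ∧ G.tgt e ∉ S) ∨ (G.tgt e ∈ S ∧ G.src e ∉ S))
      ∧ G.src e ∈ W ∧ G.tgt e ∈ W := by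
  unfold Linked at h
  revert hb
  induction h with
  | refl => exact fun hb => absurd ha hb
  | tail h1 h2 ih =>
      rename_i c b'
      intro hb
      by_cases hc : c ∈ S
      · obtain ⟨hcW, hbW, e, he, hor⟩ := h2
        rcases hor with ⟨h1', h2'⟩ | ⟨h1', h2'⟩
        · exact ⟨e, he, Or.inl ⟨h1' ▸ hc, h2' ▸ hb⟩, h1' ▸ hcW, h2' ▸ hbW⟩
        · exact ⟨e, he, Or.inr ⟨h2' ▸ hc, h1' ▸ hb⟩, h1' ▸ hbW, h2' ▸ hcW⟩
      · exact ih hc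

lemma valBtw_ne_zero_iff {W₁ W₂ : Finset V} :
    G.valBtw W₁ W₂ ≠ 0 ↔
      ∃ e : E, (G.src e ∈ W₁ ∧ G.tgt e ∈ W₂) ∨ (G.src e ∈ W₂ ∧ G.tgt e ∈ W₁) := by
  unfold valBtw valBtwIn
  rw [← Nat.pos_iff_ne_zero, Finset.card_pos, Finset.filter_nonempty_iff]
  simp

lemma valBtw_comm (W₁ W₂ : Finset V) : G.valBtw W₁ W₂ = G.valBtw W₂ W₁ := by
  unfold valBtw valBtwIn
  congr 1
  apply Finset.filter_congr
  intro e _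
  tauto

lemma valBtw_empty_right (W : Finset V) : G.valBtw W ∅ = 0 := by
  unfold valBtw valBtwIn
  simp

lemma valBtw_union_right {W₁ W₂ W₃ : Finset V} (h12 : Disjoint W₁ W₂)
    (h13 : Disjoint W₁ W₃) (h23 : Disjoint W₂ W₃) :
    G.valBtw W₁ (W₂ ∪ W₃) = G.valBtw W₁ W₂ + G.valBtw W₁ W₃ := by
  unfold valBtw valBtwIn
  rw [← Finset.card_union_of_disjoint ?hd, ← Finset.filter_or]
  · apply congrArg
    apply Finset.filter_congr
    intro e _
    simp only [Finset.mem_union]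
    tauto
  case hd =>
    rw [Finset.disjoint_left]
    intro e he1 he2
    simp only [Finset.mem_filter] at he1 he2
    have d12 := Finset.disjoint_left.mp h12
    have d13 := Finset.disjoint_left.mp h13
    have d23 := Finset.disjoint_left.mp h23
    tauto

lemma disjoint_sup' {P : Finset V} {S : Finset (Finset V)}
    (h : ∀ C ∈ S, Disjoint P C) : Disjoint P (S.sup id) := by
  rw [Finset.disjoint_left]
  intro a haP haS
  obtain ⟨C, hC, haC⟩ := Finset.mem_sup.mp haS
  exact (Finset.disjoint_left.mp (h C hC)) haP haC

lemma sup_disjoint_sup {S₁ S₂ : Finset (Finset V)}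
    (h : ∀ C ∈ S₁, ∀ C' ∈ S₂, Disjoint C C') :
    Disjoint (S₁.sup id) (S₂.sup id) :=
  disjoint_sup' (fun C' hC' => (disjoint_sup' (fun C hC => (h C hC C' hC').symm)).symm)

lemma valBtw_sup {P : Finset V} {S : Finset (Finset V)}
    (hdisjS : ∀ C ∈ S, ∀ C' ∈ S, C ≠ C' → Disjoint C C')
    (hdisjP : ∀ C ∈ S, Disjoint P C) :
    G.valBtw P (S.sup id) = ∑ C ∈ S, G.valBtw P C := by
  induction S using Finset.induction_on with
  | empty => simpa using valBtw_empty_right (G := G) P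
  | @insert C S hCS ih =>
      rw [Finset.sup_insert, Finset.sum_insert hCS]
      have h1 : Disjoint P C := hdisjP C (Finset.mem_insert_self _ _)
      have h2 : Disjoint P (S.sup id) :=
        disjoint_sup' (fun C' hC' => hdisjP C' (Finset.mem_insert_of_mem hC'))
      have h3 : Disjoint C (S.sup id) := by
        refine disjoint_sup' (fun C' hC' => ?_)
        refine hdisjS C (Finset.mem_insert_self _ _) C' (Finset.mem_insert_of_mem hC')
          (fun h => hCS (h ▸ hC'))
      rw [show (id C ⊔ S.sup id : Finset V) = C ∪ S.sup id from rfl]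
      rw [valBtw_union_right h1 h2 h3]
      rw [ih (fun C' hC' C'' hC'' => hdisjS C' (Finset.mem_insert_of_mem hC') C''
        (Finset.mem_insert_of_mem hC'')) (fun C' hC' => hdisjP C' (Finset.mem_insert_of_mem hC'))]

lemma valBtw_comps_eq_zero {W : Finset V} {C C' : Finset V}
    (hC : C ∈ G.comps Finset.univ W) (hC' : C' ∈ G.comps Finset.univ W) (hne : C ≠ C') :
    G.valBtw C C' = 0 := by
  by_contra h
  obtain ⟨e, he⟩ := valBtw_ne_zero_iff.mp h
  obtain ⟨x, hx, hCx⟩ := mem_comps.mp hC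
  obtain ⟨x', hx', hCx'⟩ := mem_comps.mp hC'
  subst hCx hCx'
  rcases he with ⟨h1, h2⟩ | ⟨h1, h2⟩
  · have hstep : G.Step Finset.univ W (G.src e) (G.tgt e) :=
      ⟨comps_subset hC h1, comps_subset hC' h2, e, Finset.mem_univ e, Or.inl ⟨rfl, rfl⟩⟩
    have : G.tgt e ∈ G.comp Finset.univ W (G.src e) :=
      mem_comp.mpr ⟨comps_subset hC' h2, Relation.ReflTransGen.single hstep⟩
    exact hne ((comp_eq_of_mem h1).symm.trans
      ((comp_eq_of_mem this).symm.trans (comp_eq_of_mem h2)))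
  · have hstep : G.Step Finset.univ W (G.src e) (G.tgt e) :=
      ⟨comps_subset hC' h1, comps_subset hC h2, e, Finset.mem_univ e, Or.inl ⟨rfl, rfl⟩⟩
    have : G.tgt e ∈ G.comp Finset.univ W (G.src e) :=
      mem_comp.mpr ⟨comps_subset hC h2, Relation.ReflTransGen.single hstep⟩
    exact hne ((comp_eq_of_mem h2).symm.trans
      ((comp_eq_of_mem this).trans (comp_eq_of_mem h1)))

lemma isConn_union {T : Finset E} {P Q : Finset V} (hP : G.IsConn T P) (hQ : G.IsConn T Q)
    {e : E} (he : e ∈ T)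
    (hPQ : (G.src e ∈ P ∧ G.tgt e ∈ Q) ∨ (G.src e ∈ Q ∧ G.tgt e ∈ P)) :
    G.IsConn T (P ∪ Q) := by
  obtain ⟨u, hu, v, hv, hstep⟩ : ∃ u ∈ P, ∃ v ∈ Q, G.Step T (P ∪ Q) u v := by
    rcases hPQ with ⟨h1, h2⟩ | ⟨h1, h2⟩
    · exact ⟨G.src e, h1, G.tgt e, h2, Finset.mem_union_left _ h1,
        Finset.mem_union_right _ h2, e, he, Or.inl ⟨rfl, rfl⟩⟩
    · exact ⟨G.tgt e, h2, G.src e, h1, Finset.mem_union_left _ h2,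
        Finset.mem_union_right _ h1, e, he, Or.inr ⟨rfl, rfl⟩⟩
  refine ⟨⟨u, Finset.mem_union_left _ hu⟩, ?_⟩
  have hlinkP : ∀ a ∈ P, G.Linked T (P ∪ Q) a u := fun a ha =>
    linked_mono Finset.subset_union_left (hP.2 a ha u hu)
  have hlinkQ : ∀ a ∈ Q, G.Linked T (P ∪ Q) a v := fun a ha =>
    linked_mono Finset.subset_union_right (hQ.2 a ha v hv)
  have huv : G.Linked T (P ∪ Q) u v := Relation.ReflTransGen.single hstep
  have hall : ∀ a ∈ P ∪ Q, G.Linked T (P ∪ Q) a u := by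
    intro a ha
    rcases Finset.mem_union.mp ha with h | h
    · exact hlinkP a h
    · exact linked_trans (hlinkQ a h) (linked_symm huv)
  intro a ha b hb
  exact linked_trans (hall a ha) (linked_symm (hall b hb))

lemma isConn_attach {P : Finset V} (hP : G.IsConn Finset.univ P)
    {S : Finset (Finset V)}
    (h : ∀ C ∈ S, G.IsConn Finset.univ C ∧ G.valBtw C P ≠ 0) :
    G.IsConn Finset.univ (P ∪ S.sup id) := by
  induction S using Finset.induction_on with
  | empty => simpa using hP
  | @insert C S hCS ih =>
      have hC := h C (Finset.mem_insert_self _ _)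
      obtain ⟨e, he⟩ := valBtw_ne_zero_iff.mp hC.2
      have hrest : G.IsConn Finset.univ (P ∪ S.sup id) :=
        ih (fun C' hC' => h C' (Finset.mem_insert_of_mem hC'))
      have hQ : G.IsConn Finset.univ ((P ∪ S.sup id) ∪ C) := by
        refine isConn_union hrest hC.1 (Finset.mem_univ e) ?_
        rcases he with ⟨h1, h2⟩ | ⟨h1, h2⟩
        · exact Or.inr ⟨h1, Finset.mem_union_left _ h2⟩
        · exact Or.inl ⟨Finset.mem_union_left _ h1, h2⟩
      have heq : P ∪ (insert C S).sup id = (P ∪ S.sup id) ∪ C := by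
        rw [Finset.sup_insert]
        show P ∪ (C ∪ S.sup id) = (P ∪ S.sup id) ∪ C
        ext w
        simp only [Finset.mem_union]
        tauto
      rw [heq]
      exact hQ

lemma compl_eq_of_disjoint_of_union_eq {s t : Finset V} (h1 : Disjoint s t)
    (h2 : s ∪ t = Finset.univ) : sᶜ = t := by
  ext v
  simp only [Finset.mem_compl]
  constructor
  · intro hv
    have hv' : v ∈ s ∪ t := h2 ▸ Finset.mem_univ v
    rcases Finset.mem_union.mp hv' with h | h
    · exact absurd h hv
    · exact h
  · intro hv hs
    exact (Finset.disjoint_left.mp h1) hs hv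

lemma valOf_compl (W : Finset V) : G.valOf Wᶜ = G.valOf W := by
  unfold valOf
  rw [compl_compl, valBtw_comm]

lemma degen_compl {n : Finset V → ℤ} {d : ℤ} {W : Finset V} (h : G.Degen n d W) :
    G.Degen n d Wᶜ := by
  unfold Degen at h ⊢
  rw [compl_compl, valOf_compl]
  linarith

lemma bcon_compl {W : Finset V} (h : W ∈ G.BCon) : Wᶜ ∈ G.BCon := by
  refine ⟨h.2, ?_⟩
  rw [compl_compl]
  exact h.1

end Multigraph

end Aux

section Aux2

namespace Multigraph

set_option linter.unusedSectionVars false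

variable {V E : Type} [Fintype V] [DecidableEq V] [Fintype E] [DecidableEq E]
variable {G : Multigraph V E}

lemma degen_union {n : Finset V → ℤ} {d : ℤ} (hn : G.IsVStab d n) {P Q : Finset V}
    (h1 : P ∈ G.BCon) (h2 : Q ∈ G.BCon) (hd1 : G.Degen n d P) (hd2 : G.Degen n d Q)
    (hdisj : Disjoint P Q) (hU : P ∪ Q ∈ G.BCon) :
    G.Degen n d (P ∪ Q) ∧ n (P ∪ Q) = n P + n Q + (G.valBtw P Q : ℤ) := by
  have h3 : (P ∪ Q)ᶜ ∈ G.BCon := bcon_compl hU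
  have hd13 : Disjoint P (P ∪ Q)ᶜ := by
    rw [Finset.disjoint_left]
    intro a ha hac
    exact (Finset.mem_compl.mp hac) (Finset.mem_union_left _ ha)
  have hd23 : Disjoint Q (P ∪ Q)ᶜ := by
    rw [Finset.disjoint_left]
    intro a ha hac
    exact (Finset.mem_compl.mp hac) (Finset.mem_union_right _ ha)
  have huniv : P ∪ Q ∪ (P ∪ Q)ᶜ = Finset.univ := Finset.union_compl _
  have hdeg3 : G.Degen n d (P ∪ Q)ᶜ :=
    (hn.two_deg P Q _ h1 h2 h3 hdisj hd13 hd23 huniv).1 hd1 hd2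
  have hts : G.triSum n d P Q (P ∪ Q)ᶜ = 0 :=
    (hn.two_sum P Q _ h1 h2 h3 hdisj hd13 hd23 huniv).2.2 ⟨hd1, hd2, hdeg3⟩
  have hval3 : G.valOf (P ∪ Q)ᶜ = G.valBtw P (P ∪ Q)ᶜ + G.valBtw Q (P ∪ Q)ᶜ := by
    have h0 : G.valOf (P ∪ Q)ᶜ = G.valBtw (P ∪ Q)ᶜ (P ∪ Q) := by
      unfold valOf; rw [compl_compl]
    rw [h0, valBtw_union_right hd13.symm hd23.symm hdisj,
      valBtw_comm _ P, valBtw_comm _ Q]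
  have hdegU : G.Degen n d (P ∪ Q) := by
    have := degen_compl hdeg3
    rwa [compl_compl] at this
  refine ⟨hdegU, ?_⟩
  unfold Degen at hdeg3
  unfold triSum at hts
  rw [compl_compl] at hdeg3
  have hval3' : (G.valOf (P ∪ Q)ᶜ : ℤ)
      = (G.valBtw P (P ∪ Q)ᶜ : ℤ) + (G.valBtw Q (P ∪ Q)ᶜ : ℤ) := by exact_mod_cast hval3
  linarith

/-- Decomposition of the components of `W₁ᶜ`: the component `Z` containing `W₂`,
together with the components of `(W₁ ∪ W₂)ᶜ` having no edge to `W₂`. -/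
lemma comps_compl_eq {W₁ W₂ : Finset V} (hdisj : Disjoint W₁ W₂)
    (h2 : G.IsConn Finset.univ W₂) {w₂ : V} (hw₂ : w₂ ∈ W₂) :
    (G.comps Finset.univ W₁ᶜ
      = insert (G.comp Finset.univ W₁ᶜ w₂)
          ((G.comps Finset.univ (W₁ ∪ W₂)ᶜ).filter (fun C => G.valBtw C W₂ = 0)))
    ∧ G.comp Finset.univ W₁ᶜ w₂ ∉
        ((G.comps Finset.univ (W₁ ∪ W₂)ᶜ).filter (fun C => G.valBtw C W₂ = 0)) := by
  have hsub : W₂ ⊆ W₁ᶜ := fun u hu =>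
    Finset.mem_compl.mpr (fun h => (Finset.disjoint_left.mp hdisj) h hu)
  have hw₂' : w₂ ∈ W₁ᶜ := hsub hw₂
  set Z := G.comp Finset.univ W₁ᶜ w₂ with hZ
  have hW₂Z : W₂ ⊆ Z := by
    intro u hu
    exact mem_comp.mpr ⟨hsub hu, linked_mono hsub (h2.2 w₂ hw₂ u hu)⟩
  have hUcsub : (W₁ ∪ W₂)ᶜ ⊆ W₁ᶜ :=
    Finset.compl_subset_compl.mpr Finset.subset_union_left
  have hnot : Z ∉ ((G.comps Finset.univ (W₁ ∪ W₂)ᶜ).filter (fun C => G.valBtw C W₂ = 0)) := by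
    intro h
    have hZsub : Z ⊆ (W₁ ∪ W₂)ᶜ := comps_subset (Finset.mem_filter.mp h).1
    have : w₂ ∈ (W₁ ∪ W₂)ᶜ := hZsub (hW₂Z hw₂)
    exact (Finset.mem_compl.mp this) (Finset.mem_union_right _ hw₂)
  refine ⟨?_, hnot⟩
  ext C
  simp only [Finset.mem_insert, Finset.mem_filter]
  constructor
  · intro hC
    obtain ⟨x, hxW, rfl⟩ := mem_comps.mp hC
    by_cases hCZ : G.comp Finset.univ W₁ᶜ x = Z
    · exact Or.inl hCZ
    · right
      have hCW₂ : ∀ y ∈ W₂, y ∉ G.comp Finset.univ W₁ᶜ x := by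
        intro y hy hyC
        exact hCZ ((comp_eq_of_mem hyC).symm.trans (comp_eq_of_mem (hW₂Z hy)))
      have hCU : G.comp Finset.univ W₁ᶜ x ⊆ (W₁ ∪ W₂)ᶜ := by
        intro u hu
        have hu1 : u ∈ W₁ᶜ := comp_subset hu
        have hu2 : u ∉ W₂ := fun h => hCW₂ u h hu
        rw [Finset.mem_compl, Finset.mem_union]
        exact fun h => h.elim (Finset.mem_compl.mp hu1) hu2
      have hxU : x ∈ (W₁ ∪ W₂)ᶜ := hCU (mem_comp_self hxW)
      have hcompeq : G.comp Finset.univ (W₁ ∪ W₂)ᶜ x = G.comp Finset.univ W₁ᶜ x :=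
        comp_eq_of_subset hUcsub hCU
      refine ⟨mem_comps.mpr ⟨x, hxU, hcompeq⟩, ?_⟩
      by_contra hval
      obtain ⟨e, he⟩ := valBtw_ne_zero_iff.mp hval
      rcases he with ⟨hsrc, htgt⟩ | ⟨hsrc, htgt⟩
      · have hstep : G.Step Finset.univ W₁ᶜ (G.src e) (G.tgt e) :=
          ⟨comp_subset hsrc, hsub htgt, e, Finset.mem_univ e, Or.inl ⟨rfl, rfl⟩⟩
        have : G.tgt e ∈ G.comp Finset.univ W₁ᶜ (G.src e) :=
          mem_comp.mpr ⟨hsub htgt, Relation.ReflTransGen.single hstep⟩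
        rw [comp_eq_of_mem hsrc] at this
        exact hCW₂ _ htgt this
      · have hstep : G.Step Finset.univ W₁ᶜ (G.tgt e) (G.src e) :=
          ⟨comp_subset htgt, hsub hsrc, e, Finset.mem_univ e, Or.inr ⟨rfl, rfl⟩⟩
        have : G.src e ∈ G.comp Finset.univ W₁ᶜ (G.tgt e) :=
          mem_comp.mpr ⟨hsub hsrc, Relation.ReflTransGen.single hstep⟩
        rw [comp_eq_of_mem htgt] at this
        exact hCW₂ _ hsrc this
  · intro hC
    rcases hC with rfl | ⟨hCK, hCval⟩
    · exact comp_mem_comps hw₂'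
    · obtain ⟨x, hxU, rfl⟩ := mem_comps.mp hCK
      have hxW : x ∈ W₁ᶜ := hUcsub hxU
      have hsubCU : G.comp Finset.univ (W₁ ∪ W₂)ᶜ x ⊆ (W₁ ∪ W₂)ᶜ := comp_subset
      have hkey : ∀ u : V, G.Linked Finset.univ W₁ᶜ x u →
          u ∈ G.comp Finset.univ (W₁ ∪ W₂)ᶜ x := by
        intro u hu
        unfold Linked at hu
        induction hu with
        | refl => exact mem_comp_self hxU
        | tail h1 h2 ih =>
            rename_i b c
            have hbC : b ∈ G.comp Finset.univ (W₁ ∪ W₂)ᶜ x := ih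
            have hcW : c ∈ W₁ᶜ := h2.2.1
            by_cases hcW₂ : c ∈ W₂
            · exfalso
              refine valBtw_ne_zero_iff.mpr ?_ hCval
              obtain ⟨_, _, e, _, hor⟩ := h2
              rcases hor with ⟨hs, ht⟩ | ⟨hs, ht⟩
              · exact ⟨e, Or.inl ⟨hs ▸ hbC, ht ▸ hcW₂⟩⟩
              · exact ⟨e, Or.inr ⟨hs ▸ hcW₂, ht ▸ hbC⟩⟩
            · have hcU : c ∈ (W₁ ∪ W₂)ᶜ := by
                rw [Finset.mem_compl, Finset.mem_union]
                exact fun h => h.elim (Finset.mem_compl.mp hcW) hcW₂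
              have hstep : G.Step Finset.univ (W₁ ∪ W₂)ᶜ b c := by
                obtain ⟨_, _, e, he, hor⟩ := h2
                exact ⟨hsubCU hbC, hcU, e, he, hor⟩
              have : c ∈ G.comp Finset.univ (W₁ ∪ W₂)ᶜ b :=
                mem_comp.mpr ⟨hcU, Relation.ReflTransGen.single hstep⟩
              rwa [comp_eq_of_mem hbC] at this
      have heq : G.comp Finset.univ W₁ᶜ x = G.comp Finset.univ (W₁ ∪ W₂)ᶜ x := by
        apply Finset.Subset.antisymm
        · intro u hu
          exact hkey u (mem_comp.mp hu).2
        · intro u hu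
          obtain ⟨hu1, hu2⟩ := mem_comp.mp hu
          exact mem_comp.mpr ⟨hUcsub hu1, linked_mono hUcsub hu2⟩
      exact mem_comps.mpr ⟨x, hxW, heq⟩

end Multigraph

end Aux2

set_option maxHeartbeats 1000000 in
/-- Lemma on additivity of the extended V-function on the extended
degeneracy subset: if `W₁`, `W₂` are disjoint and `W₁`, `W₂`, `W₁ ∪ W₂` all belong to
`𝒟̂(𝔫)`, then `𝔫_{W₁∪W₂} = 𝔫_{W₁} + 𝔫_{W₂} + val(W₁,W₂)` for the extended V-function. -/
theorem extendV_add_of_mem_extDeg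
    {V E : Type} [Fintype V] [DecidableEq V] [Fintype E] [DecidableEq E]
    (G : Multigraph V E) (hG : G.IsConn Finset.univ Finset.univ)
    (d : ℤ) (n : Finset V → ℤ) (hn : G.IsVStab d n)
    (W₁ W₂ : Finset V) (hdisj : Disjoint W₁ W₂)
    (h₁ : W₁ ∈ G.ExtDeg n d) (h₂ : W₂ ∈ G.ExtDeg n d)
    (h₁₂ : W₁ ∪ W₂ ∈ G.ExtDeg n d) :
    G.extendV n d (W₁ ∪ W₂) =
      G.extendV n d W₁ + G.extendV n d W₂ + (G.valBtw W₁ W₂ : ℤ) := by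
  classical
  have hVne : (Finset.univ : Finset V).Nonempty := hG.1
  have unpack : ∀ {W : Finset V}, W ∈ G.ExtDeg n d →
      W = Finset.univ ∨ (G.IsConn Finset.univ W ∧
        ∀ C ∈ G.comps Finset.univ Wᶜ, G.InDeg n d C) := by
    intro W hW
    simpa only [Multigraph.ExtDeg, Multigraph.ExtOf, Set.mem_setOf_eq,
      Multigraph.Con] using hW
  have h₁' := unpack h₁
  have h₂' := unpack h₂
  have h₁₂' := unpack h₁₂
  have hW1ne : W₁ ≠ Finset.univ := by
    intro h
    rcases h₂' with h' | ⟨hc', _⟩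
    · obtain ⟨x, _⟩ := hVne
      exact Finset.disjoint_left.mp hdisj (h ▸ Finset.mem_univ x) (h' ▸ Finset.mem_univ x)
    · obtain ⟨x, hx⟩ := hc'.1
      exact Finset.disjoint_left.mp hdisj (h ▸ Finset.mem_univ x) hx
  have hW2ne : W₂ ≠ Finset.univ := by
    intro h
    rcases h₁' with h' | ⟨hc', _⟩
    · obtain ⟨x, _⟩ := hVne
      exact Finset.disjoint_left.mp hdisj (h' ▸ Finset.mem_univ x) (h ▸ Finset.mem_univ x)
    · obtain ⟨x, hx⟩ := hc'.1
      exact Finset.disjoint_left.mp hdisj hx (h ▸ Finset.mem_univ x)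
  obtain ⟨hW1conn, hW1D⟩ := h₁'.resolve_left hW1ne
  obtain ⟨hW2conn, hW2D⟩ := h₂'.resolve_left hW2ne
  have hUconn : G.IsConn Finset.univ (W₁ ∪ W₂) := by
    rcases h₁₂' with h | ⟨hc, _⟩
    · rw [h]; exact hG
    · exact hc
  have hUD : ∀ C ∈ G.comps Finset.univ (W₁ ∪ W₂)ᶜ, G.InDeg n d C := by
    rcases h₁₂' with h | ⟨_, hd⟩
    · intro C hC
      exfalso
      rw [h, Finset.compl_univ] at hC
      simp [Multigraph.comps] at hC
    · exact hd
  -- reduction of extendV to an explicit formula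
  have hext : ∀ W' : Finset V, G.IsConn Finset.univ W' →
      (∀ C ∈ G.comps Finset.univ W'ᶜ, G.InDeg n d C) →
      G.extendV n d W' = d - (∑ C ∈ G.comps Finset.univ W'ᶜ, n C) - (G.valOf W' : ℤ) := by
    intro W' hconn hD
    unfold Multigraph.extendV Multigraph.connVal
    rw [Multigraph.comps_eq_singleton hconn, Finset.sum_singleton]
    have hfil : (G.comps Finset.univ W'ᶜ).filter (fun C => ¬ G.InDeg n d C) = ∅ :=
      Finset.filter_eq_empty_iff.mpr (fun C hC => not_not_intro (hD C hC))
    rw [hfil]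
    simp
  obtain ⟨w₁, hw₁⟩ := hW1conn.1
  obtain ⟨w₂, hw₂⟩ := hW2conn.1
  have hw₂' : w₂ ∈ W₁ᶜ := Finset.mem_compl.mpr (fun h => Finset.disjoint_left.mp hdisj h hw₂)
  have hw₁' : w₁ ∈ W₂ᶜ := Finset.mem_compl.mpr (fun h => Finset.disjoint_left.mp hdisj hw₁ h)
  set Z := G.comp Finset.univ W₁ᶜ w₂ with hZdef
  set Y := G.comp Finset.univ W₂ᶜ w₁ with hYdef
  set K := G.comps Finset.univ (W₁ ∪ W₂)ᶜ with hKdef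
  set A := K.filter (fun C => G.valBtw C W₂ = 0) with hAdef
  set B := K.filter (fun C => G.valBtw C W₁ = 0) with hBdef
  set Tc := K.filter (fun C => ¬ G.valBtw C W₁ = 0 ∧ ¬ G.valBtw C W₂ = 0) with hTdef
  have hK₁ : G.comps Finset.univ W₁ᶜ = insert Z A :=
    (Multigraph.comps_compl_eq hdisj hW2conn hw₂).1
  have hZA : Z ∉ A := (Multigraph.comps_compl_eq hdisj hW2conn hw₂).2
  have hK₂raw := Multigraph.comps_compl_eq (G := G) hdisj.symm hW1conn hw₁
  rw [Finset.union_comm W₂ W₁] at hK₂raw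
  have hK₂ : G.comps Finset.univ W₂ᶜ = insert Y B := hK₂raw.1
  have hYB : Y ∉ B := hK₂raw.2
  have hZK₁ : Z ∈ G.comps Finset.univ W₁ᶜ := Multigraph.comp_mem_comps hw₂'
  -- basic facts about K
  have hsubUc : ∀ C ∈ K, C ⊆ (W₁ ∪ W₂)ᶜ := fun C hC => Multigraph.comps_subset hC
  have hdisjW₁C : ∀ C ∈ K, Disjoint W₁ C := by
    intro C hC
    rw [Finset.disjoint_right]
    intro a haC haW
    exact (Finset.mem_compl.mp (hsubUc C hC haC)) (Finset.mem_union_left _ haW)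
  have hdisjW₂C : ∀ C ∈ K, Disjoint W₂ C := by
    intro C hC
    rw [Finset.disjoint_right]
    intro a haC haW
    exact (Finset.mem_compl.mp (hsubUc C hC haC)) (Finset.mem_union_right _ haW)
  have hKpair : ∀ C ∈ K, ∀ C' ∈ K, C ≠ C' → Disjoint C C' :=
    fun C hC C' hC' hne => Multigraph.comps_disjoint hC hC' hne
  have hKInDeg : ∀ C ∈ K, G.InDeg n d C := hUD
  have hKBCon : ∀ C ∈ K, C ∈ G.BCon := fun C hC => (hKInDeg C hC).1
  have hKdeg : ∀ C ∈ K, G.Degen n d C := fun C hC => (hKInDeg C hC).2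
  have hKconn : ∀ C ∈ K, G.IsConn Finset.univ C := fun C hC => (hKBCon C hC).1
  have hKvalzero : ∀ C ∈ K, ∀ C' ∈ K, C ≠ C' → G.valBtw C C' = 0 :=
    fun C hC C' hC' hne => Multigraph.valBtw_comps_eq_zero hC hC' hne
  have hCclosed : ∀ C ∈ K, ∀ a ∈ C, ∀ b : V,
      G.Step Finset.univ (W₁ ∪ W₂)ᶜ a b → b ∈ C := by
    intro C hC a ha b hstep
    obtain ⟨x, hx, rfl⟩ := Multigraph.mem_comps.mp hC
    have hb : b ∈ G.comp Finset.univ (W₁ ∪ W₂)ᶜ a :=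
      Multigraph.mem_comp.mpr ⟨hstep.2.1, Relation.ReflTransGen.single hstep⟩
    rwa [Multigraph.comp_eq_of_mem ha] at hb
  have hdich : ∀ C ∈ K, ¬ G.valBtw C W₁ = 0 ∨ ¬ G.valBtw C W₂ = 0 := by
    intro C hC
    obtain ⟨x, hxC⟩ := Multigraph.comps_nonempty hC
    have hxw : G.Linked Finset.univ Finset.univ x w₁ :=
      hG.2 x (Finset.mem_univ x) w₁ (Finset.mem_univ w₁)
    have hw₁C : w₁ ∉ C := Finset.disjoint_left.mp (hdisjW₁C C hC) hw₁
    obtain ⟨e, _, hcross, hsrcW, htgtW⟩ := Multigraph.exists_cross hxw hxC hw₁C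
    rcases hcross with ⟨hin, hout⟩ | ⟨hin, hout⟩
    · by_cases h1 : G.tgt e ∈ W₁
      · exact Or.inl (Multigraph.valBtw_ne_zero_iff.mpr ⟨e, Or.inl ⟨hin, h1⟩⟩)
      by_cases h2 : G.tgt e ∈ W₂
      · exact Or.inr (Multigraph.valBtw_ne_zero_iff.mpr ⟨e, Or.inl ⟨hin, h2⟩⟩)
      exfalso
      have hbU : G.tgt e ∈ (W₁ ∪ W₂)ᶜ := by
        rw [Finset.mem_compl, Finset.mem_union]
        exact fun h => h.elim h1 h2
      have hstep : G.Step Finset.univ (W₁ ∪ W₂)ᶜ (G.src e) (G.tgt e) :=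
        ⟨hsubUc C hC hin, hbU, e, Finset.mem_univ e, Or.inl ⟨rfl, rfl⟩⟩
      exact hout (hCclosed C hC _ hin _ hstep)
    · by_cases h1 : G.src e ∈ W₁
      · exact Or.inl (Multigraph.valBtw_ne_zero_iff.mpr ⟨e, Or.inr ⟨h1, hin⟩⟩)
      by_cases h2 : G.src e ∈ W₂
      · exact Or.inr (Multigraph.valBtw_ne_zero_iff.mpr ⟨e, Or.inr ⟨h2, hin⟩⟩)
      exfalso
      have hbU : G.src e ∈ (W₁ ∪ W₂)ᶜ := by
        rw [Finset.mem_compl, Finset.mem_union]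
        exact fun h => h.elim h1 h2
      have hstep : G.Step Finset.univ (W₁ ∪ W₂)ᶜ (G.tgt e) (G.src e) :=
        ⟨hsubUc C hC hin, hbU, e, Finset.mem_univ e, Or.inr ⟨rfl, rfl⟩⟩
      exact hout (hCclosed C hC _ hin _ hstep)
  have hAK : ∀ C ∈ A, C ∈ K := fun C hC => Finset.mem_filter.mp hC |>.1
  have hBK : ∀ C ∈ B, C ∈ K := fun C hC => Finset.mem_filter.mp hC |>.1
  have hTcK : ∀ C ∈ Tc, C ∈ K := fun C hC => Finset.mem_filter.mp hC |>.1
  have hAval : ∀ C ∈ A, G.valBtw C W₂ = 0 := fun C hC => (Finset.mem_filter.mp hC).2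
  have hBval : ∀ C ∈ B, G.valBtw C W₁ = 0 := fun C hC => (Finset.mem_filter.mp hC).2
  have hTcval : ∀ C ∈ Tc, ¬ G.valBtw C W₁ = 0 ∧ ¬ G.valBtw C W₂ = 0 :=
    fun C hC => (Finset.mem_filter.mp hC).2
  have hBval2 : ∀ C ∈ B, ¬ G.valBtw C W₂ = 0 := by
    intro C hC
    rcases hdich C (hBK C hC) with h | h
    · exact absurd (hBval C hC) h
    · exact h
  have hAval2 : ∀ C ∈ A, ¬ G.valBtw C W₁ = 0 := by
    intro C hC
    rcases hdich C (hAK C hC) with h | h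
    · exact h
    · exact absurd (hAval C hC) h
  have hAB : ∀ C ∈ A, ∀ C' ∈ B, C ≠ C' := by
    intro C hC C' hC' h
    exact hAval2 C hC (h ▸ hBval C' hC')
  have hATc : ∀ C ∈ A, ∀ C' ∈ Tc, C ≠ C' := by
    intro C hC C' hC' h
    exact (hTcval C' hC').2 (h ▸ hAval C hC)
  have hBTc : ∀ C ∈ B, ∀ C' ∈ Tc, C ≠ C' := by
    intro C hC C' hC' h
    exact (hTcval C' hC').1 (h ▸ hBval C hC)
  have hZW₁ : Disjoint Z W₁ := by
    rw [Finset.disjoint_left]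
    intro a haZ haW
    exact Finset.mem_compl.mp (Multigraph.comp_subset haZ) haW
  have hZAdisj : ∀ C ∈ A, Disjoint Z C := by
    intro C hC
    refine Multigraph.comps_disjoint hZK₁ ?_ ?_
    · rw [hK₁]; exact Finset.mem_insert_of_mem hC
    · intro h; exact hZA (h ▸ hC)
  have hZc : Zᶜ = W₁ ∪ A.sup id := by
    apply Multigraph.compl_eq_of_disjoint_of_union_eq
    · exact Finset.disjoint_union_right.mpr ⟨hZW₁, Multigraph.disjoint_sup' hZAdisj⟩
    · have h1 := Multigraph.comps_sup (G := G) Finset.univ W₁ᶜ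
      rw [hK₁, Finset.sup_insert] at h1
      have h1' : (Z ∪ A.sup id : Finset V) = W₁ᶜ := h1
      calc Z ∪ (W₁ ∪ A.sup id) = W₁ ∪ (Z ∪ A.sup id) := Finset.union_left_comm _ _ _
        _ = W₁ ∪ W₁ᶜ := by rw [h1']
        _ = Finset.univ := Finset.union_compl _
  have hYW₂ : Disjoint Y W₂ := by
    rw [Finset.disjoint_left]
    intro a haY haW
    exact Finset.mem_compl.mp (Multigraph.comp_subset haY) haW
  have hYK₂ : Y ∈ G.comps Finset.univ W₂ᶜ := Multigraph.comp_mem_comps hw₁'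
  have hYBdisj : ∀ C ∈ B, Disjoint Y C := by
    intro C hC
    refine Multigraph.comps_disjoint hYK₂ ?_ ?_
    · rw [hK₂]; exact Finset.mem_insert_of_mem hC
    · intro h; exact hYB (h ▸ hC)
  have hYc : Yᶜ = W₂ ∪ B.sup id := by
    apply Multigraph.compl_eq_of_disjoint_of_union_eq
    · exact Finset.disjoint_union_right.mpr ⟨hYW₂, Multigraph.disjoint_sup' hYBdisj⟩
    · have h1 := Multigraph.comps_sup (G := G) Finset.univ W₂ᶜ
      rw [hK₂, Finset.sup_insert] at h1
      have h1' : (Y ∪ B.sup id : Finset V) = W₂ᶜ := h1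
      calc Y ∪ (W₂ ∪ B.sup id) = W₂ ∪ (Y ∪ B.sup id) := Finset.union_left_comm _ _ _
        _ = W₂ ∪ W₂ᶜ := by rw [h1']
        _ = Finset.univ := Finset.union_compl _
  have hsupK : K.sup id = (W₁ ∪ W₂)ᶜ := Multigraph.comps_sup _ _
  have hcover : ∀ v : V, v ∈ W₁ ∨ v ∈ W₂ ∨ v ∈ A.sup id ∨ v ∈ B.sup id ∨ v ∈ Tc.sup id := by
    intro v
    by_cases h1 : v ∈ W₁
    · exact Or.inl h1
    by_cases h2 : v ∈ W₂
    · exact Or.inr (Or.inl h2)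
    have hvU : v ∈ (W₁ ∪ W₂)ᶜ := by
      rw [Finset.mem_compl, Finset.mem_union]
      exact fun h => h.elim h1 h2
    rw [← hsupK] at hvU
    obtain ⟨C, hC, hvC⟩ := Finset.mem_sup.mp hvU
    by_cases c1 : G.valBtw C W₂ = 0
    · exact Or.inr (Or.inr (Or.inl (Finset.mem_sup.mpr
        ⟨C, Finset.mem_filter.mpr ⟨hC, c1⟩, hvC⟩)))
    by_cases c2 : G.valBtw C W₁ = 0
    · exact Or.inr (Or.inr (Or.inr (Or.inl (Finset.mem_sup.mpr
        ⟨C, Finset.mem_filter.mpr ⟨hC, c2⟩, hvC⟩))))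
    · exact Or.inr (Or.inr (Or.inr (Or.inr (Finset.mem_sup.mpr
        ⟨C, Finset.mem_filter.mpr ⟨hC, c2, c1⟩, hvC⟩))))
  -- the complement identity for partial unions
  have hXc_eq : ∀ S : Finset (Finset V), S ⊆ Tc →
      (Zᶜ ∪ S.sup id)ᶜ = W₂ ∪ (B ∪ (Tc \ S)).sup id := by
    intro S hS
    have hSK : ∀ C ∈ S, C ∈ K := fun C hC => hTcK C (hS hC)
    have hBTsK : ∀ C ∈ B ∪ (Tc \ S), C ∈ K := by
      intro C hC
      rcases Finset.mem_union.mp hC with h | h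
      · exact hBK C h
      · exact hTcK C (Finset.mem_sdiff.mp h).1
    apply Multigraph.compl_eq_of_disjoint_of_union_eq
    · rw [hZc, Finset.union_assoc]
      refine Finset.disjoint_union_left.mpr ⟨?_, ?_⟩
      · refine Finset.disjoint_union_right.mpr ⟨hdisj, ?_⟩
        exact Multigraph.disjoint_sup' (fun C hC => hdisjW₁C C (hBTsK C hC))
      · refine Finset.disjoint_union_left.mpr ⟨?_, ?_⟩
        · refine Finset.disjoint_union_right.mpr ⟨?_, ?_⟩
          · exact (Multigraph.disjoint_sup' (fun C hC => hdisjW₂C C (hAK C hC))).symm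
          · refine Multigraph.sup_disjoint_sup ?_
            intro C hC C' hC'
            rcases Finset.mem_union.mp hC' with h | h
            · exact hKpair C (hAK C hC) C' (hBK C' h) (hAB C hC C' h)
            · exact hKpair C (hAK C hC) C' (hTcK C' (Finset.mem_sdiff.mp h).1)
                (hATc C hC C' (Finset.mem_sdiff.mp h).1)
        · refine Finset.disjoint_union_right.mpr ⟨?_, ?_⟩
          · exact (Multigraph.disjoint_sup' (fun C hC => hdisjW₂C C (hSK C hC))).symm
          · refine Multigraph.sup_disjoint_sup ?_
            intro C hC C' hC'
            rcases Finset.mem_union.mp hC' with h | h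
            · exact hKpair C (hSK C hC) C' (hBK C' h)
                (fun he => hBTc C' h C (hS hC) he.symm)
            · refine hKpair C (hSK C hC) C' (hTcK C' (Finset.mem_sdiff.mp h).1) ?_
              intro he
              exact (Finset.mem_sdiff.mp h).2 (he ▸ hC)
    · apply Finset.eq_univ_of_forall
      intro v
      simp only [Finset.mem_union]
      rcases hcover v with h | h | h | h | h
      · left; left; rw [hZc]; exact Finset.mem_union_left _ h
      · right; left; exact h
      · left; left; rw [hZc]; exact Finset.mem_union_right _ h
      · right; right
        obtain ⟨C, hC, hvC⟩ := Finset.mem_sup.mp h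
        exact Finset.mem_sup.mpr ⟨C, Finset.mem_union_left _ hC, hvC⟩
      · obtain ⟨C, hC, hvC⟩ := Finset.mem_sup.mp h
        by_cases hCS : C ∈ S
        · left; right; exact Finset.mem_sup.mpr ⟨C, hCS, hvC⟩
        · right; right
          exact Finset.mem_sup.mpr ⟨C, Finset.mem_union_right _
            (Finset.mem_sdiff.mpr ⟨hC, hCS⟩), hvC⟩
  have hZ_eq : Z = W₂ ∪ (B ∪ Tc).sup id := by
    have h0 := hXc_eq ∅ (Finset.empty_subset _)
    simp only [Finset.sup_empty, Finset.bot_eq_empty, Finset.union_empty,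
      Finset.sdiff_empty, compl_compl] at h0
    exact h0
  have hZInDeg := hW1D Z hZK₁
  have hZBCon : Z ∈ G.BCon := hZInDeg.1
  have hZdeg : G.Degen n d Z := hZInDeg.2
  have hW₁Zc : W₁ ⊆ Zᶜ := by rw [hZc]; exact Finset.subset_union_left
  -- the key induction
  have key : ∀ S : Finset (Finset V), S ⊆ Tc →
      (Zᶜ ∪ S.sup id) ∈ G.BCon ∧ G.Degen n d (Zᶜ ∪ S.sup id) ∧
      n (Zᶜ ∪ S.sup id) = n Zᶜ + ∑ C ∈ S, (n C + (G.valBtw C W₁ : ℤ)) := by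
    intro S
    induction S using Finset.induction_on with
    | empty =>
        intro _
        simp only [Finset.sup_empty, Finset.bot_eq_empty, Finset.union_empty,
          Finset.sum_empty, add_zero]
        exact ⟨Multigraph.bcon_compl hZBCon, Multigraph.degen_compl hZdeg, by trivial⟩
    | @insert C S hCS ih =>
        intro hsub
        have hCTc : C ∈ Tc := hsub (Finset.mem_insert_self _ _)
        have hSsub : S ⊆ Tc := fun x hx => hsub (Finset.mem_insert_of_mem hx)
        obtain ⟨hXBCon, hXdeg, hXn⟩ := ih hSsub
        have hCK : C ∈ K := hTcK C hCTc
        have hCBCon : C ∈ G.BCon := hKBCon C hCK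
        have hCdeg : G.Degen n d C := hKdeg C hCK
        have hSK : ∀ C' ∈ S, C' ∈ K := fun C' hC' => hTcK C' (hSsub hC')
        have hCnotS : ∀ C' ∈ S, C ≠ C' := fun C' hC' he => hCS (he ▸ hC')
        have hins : Zᶜ ∪ (insert C S).sup id = (Zᶜ ∪ S.sup id) ∪ C := by
          rw [Finset.sup_insert, Finset.sup_eq_union, id_eq, Finset.union_comm C,
            ← Finset.union_assoc]
        have hdisjXC : Disjoint (Zᶜ ∪ S.sup id) C := by
          rw [hZc, Finset.union_assoc]
          refine Finset.disjoint_union_left.mpr ⟨hdisjW₁C C hCK, ?_⟩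
          refine Finset.disjoint_union_left.mpr ⟨?_, ?_⟩
          · exact (Multigraph.disjoint_sup' (fun C' hC' => hKpair C hCK C' (hAK C' hC')
              (hATc C' hC' C hCTc).symm)).symm
          · exact (Multigraph.disjoint_sup' (fun C' hC' => hKpair C hCK C' (hSK C' hC')
              (hCnotS C' hC'))).symm
        obtain ⟨e, he⟩ := Multigraph.valBtw_ne_zero_iff.mp (hTcval C hCTc).1
        have hX'conn : G.IsConn Finset.univ ((Zᶜ ∪ S.sup id) ∪ C) := by
          refine Multigraph.isConn_union hXBCon.1 (hKconn C hCK) (Finset.mem_univ e) ?_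
          rcases he with ⟨h1, h2⟩ | ⟨h1, h2⟩
          · exact Or.inr ⟨h1, Finset.mem_union_left _ (hW₁Zc h2)⟩
          · exact Or.inl ⟨Finset.mem_union_left _ (hW₁Zc h1), h2⟩
        have hX'c_conn : G.IsConn Finset.univ ((Zᶜ ∪ S.sup id) ∪ C)ᶜ := by
          rw [← hins, hXc_eq (insert C S) hsub]
          refine Multigraph.isConn_attach hW2conn ?_
          intro C' hC'
          rcases Finset.mem_union.mp hC' with h | h
          · refine ⟨hKconn C' (hBK C' h), ?_⟩
            exact hBval2 C' h
          · refine ⟨hKconn C' (hTcK C' (Finset.mem_sdiff.mp h).1), ?_⟩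
            exact (hTcval C' (Finset.mem_sdiff.mp h).1).2
        have hX'BCon : (Zᶜ ∪ S.sup id) ∪ C ∈ G.BCon := ⟨hX'conn, hX'c_conn⟩
        obtain ⟨hX'deg, hX'n⟩ := Multigraph.degen_union hn hXBCon hCBCon hXdeg hCdeg
          hdisjXC hX'BCon
        have hvalXC : G.valBtw (Zᶜ ∪ S.sup id) C = G.valBtw C W₁ := by
          rw [Multigraph.valBtw_comm, hZc, Finset.union_assoc]
          rw [Multigraph.valBtw_union_right (hdisjW₁C C hCK).symm ?d2 ?d3]
          case d2 =>
            refine Finset.disjoint_union_right.mpr ⟨?_, ?_⟩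
            · exact Multigraph.disjoint_sup' (fun C' hC' => hKpair C hCK C' (hAK C' hC')
                (hATc C' hC' C hCTc).symm)
            · exact Multigraph.disjoint_sup' (fun C' hC' => hKpair C hCK C' (hSK C' hC')
                (hCnotS C' hC'))
          case d3 =>
            refine Finset.disjoint_union_right.mpr ⟨?_, ?_⟩
            · exact Multigraph.disjoint_sup' (fun C' hC' => hdisjW₁C C' (hAK C' hC'))
            · exact Multigraph.disjoint_sup' (fun C' hC' => hdisjW₁C C' (hSK C' hC'))
          have hzero : G.valBtw C (A.sup id ∪ S.sup id) = 0 := by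
            rw [Multigraph.valBtw_union_right ?e1 ?e2 ?e3]
            case e1 => exact Multigraph.disjoint_sup' (fun C' hC' => hKpair C hCK C'
              (hAK C' hC') (hATc C' hC' C hCTc).symm)
            case e2 => exact Multigraph.disjoint_sup' (fun C' hC' => hKpair C hCK C'
              (hSK C' hC') (hCnotS C' hC'))
            case e3 => exact Multigraph.sup_disjoint_sup (fun C' hC' C'' hC'' =>
              hKpair C' (hAK C' hC') C'' (hSK C'' hC'') (hATc C' hC' C'' (hSsub hC'')))
            have z1 : G.valBtw C (A.sup id) = 0 := by
              rw [Multigraph.valBtw_sup (fun C' hC' C'' hC'' hne => hKpair C' (hAK C' hC')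
                C'' (hAK C'' hC'') hne) (fun C' hC' => hKpair C hCK C' (hAK C' hC')
                (hATc C' hC' C hCTc).symm)]
              exact Finset.sum_eq_zero (fun C' hC' => hKvalzero C hCK C' (hAK C' hC')
                (hATc C' hC' C hCTc).symm)
            have z2 : G.valBtw C (S.sup id) = 0 := by
              rw [Multigraph.valBtw_sup (fun C' hC' C'' hC'' hne => hKpair C' (hSK C' hC')
                C'' (hSK C'' hC'') hne) (fun C' hC' => hKpair C hCK C' (hSK C' hC')
                (hCnotS C' hC'))]
              exact Finset.sum_eq_zero (fun C' hC' => hKvalzero C hCK C' (hSK C' hC')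
                (hCnotS C' hC'))
            rw [z1, z2]
          rw [hzero, add_zero]
        refine ⟨?_, ?_, ?_⟩
        · rw [hins]; exact hX'BCon
        · rw [hins]; exact hX'deg
        · rw [hins, hX'n, hXn, hvalXC, Finset.sum_insert hCS]
          ring
  -- final assembly
  have hBTcK : ∀ C ∈ B ∪ Tc, C ∈ K := by
    intro C hC
    rcases Finset.mem_union.mp hC with h | h
    · exact hBK C h
    · exact hTcK C h
  have hXTc : Zᶜ ∪ Tc.sup id = Y := by
    have h0 := hXc_eq Tc (Finset.Subset.refl _)
    rw [Finset.sdiff_self, Finset.union_empty] at h0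
    have h1 := congrArg (·ᶜ) h0
    simp only [compl_compl] at h1
    rw [h1, ← hYc, compl_compl]
  obtain ⟨_, _, hnY⟩ := key Tc (Finset.Subset.refl _)
  rw [hXTc] at hnY
  have hZdegEq : n Z + n Zᶜ + (G.valOf Z : ℤ) = d := by
    have h := hZdeg
    unfold Multigraph.Degen at h
    linarith
  have hdisjZA : Disjoint Z (A.sup id) := Multigraph.disjoint_sup' hZAdisj
  have hdisjW₁A : Disjoint W₁ (A.sup id) :=
    Multigraph.disjoint_sup' (fun C hC => hdisjW₁C C (hAK C hC))
  have hvalZsplit : G.valOf Z = G.valBtw Z W₁ + G.valBtw Z (A.sup id) := by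
    unfold Multigraph.valOf
    rw [hZc, Multigraph.valBtw_union_right hZW₁ hdisjZA hdisjW₁A]
  have hAmem1 : ∀ C ∈ A, C ∈ G.comps Finset.univ W₁ᶜ := by
    intro C hC
    rw [hK₁]
    exact Finset.mem_insert_of_mem hC
  have hZneA : ∀ C ∈ A, Z ≠ C := fun C hC h => hZA (by rw [h]; exact hC)
  have hvalZA : G.valBtw Z (A.sup id) = 0 := by
    rw [Multigraph.valBtw_sup (fun C hC C' hC' hne => hKpair C (hAK C hC) C' (hAK C' hC') hne)
      hZAdisj]
    exact Finset.sum_eq_zero (fun C hC =>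
      Multigraph.valBtw_comps_eq_zero hZK₁ (hAmem1 C hC) (hZneA C hC))
  have hBTcdisj : Disjoint B Tc := by
    rw [Finset.disjoint_left]
    intro C hC hC'
    exact (hTcval C hC').1 (hBval C hC)
  have hvalZW₁ : G.valBtw Z W₁ = G.valBtw W₁ W₂ + ∑ C ∈ Tc, G.valBtw C W₁ := by
    rw [Multigraph.valBtw_comm, hZ_eq]
    rw [Multigraph.valBtw_union_right hdisj ?q2 ?q3]
    case q2 => exact Multigraph.disjoint_sup' (fun C hC => hdisjW₁C C (hBTcK C hC))
    case q3 => exact Multigraph.disjoint_sup' (fun C hC => hdisjW₂C C (hBTcK C hC))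
    rw [Multigraph.valBtw_sup (fun C hC C' hC' hne => hKpair C (hBTcK C hC) C'
      (hBTcK C' hC') hne) (fun C hC => hdisjW₁C C (hBTcK C hC))]
    rw [Finset.sum_union hBTcdisj]
    have hz : ∑ C ∈ B, G.valBtw W₁ C = 0 := Finset.sum_eq_zero (fun C hC => by
      rw [Multigraph.valBtw_comm]; exact hBval C hC)
    rw [hz, zero_add]
    congr 1
    exact Finset.sum_congr rfl (fun C _ => Multigraph.valBtw_comm _ _)
  have hvalZint : (G.valOf Z : ℤ)
      = (G.valBtw W₁ W₂ : ℤ) + ∑ C ∈ Tc, (G.valBtw C W₁ : ℤ) := by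
    rw [hvalZsplit, hvalZA, hvalZW₁]
    push_cast
    ring
  have hstar : n Z + n Y + (G.valBtw W₁ W₂ : ℤ) - (∑ C ∈ Tc, n C) = d := by
    have hsplit : ∑ C ∈ Tc, (n C + (G.valBtw C W₁ : ℤ))
        = (∑ C ∈ Tc, n C) + ∑ C ∈ Tc, (G.valBtw C W₁ : ℤ) := Finset.sum_add_distrib
    rw [hsplit] at hnY
    linarith [hZdegEq, hvalZint, hnY]
  have hsum1 : ∑ C ∈ G.comps Finset.univ W₁ᶜ, n C = n Z + ∑ C ∈ A, n C := by
    rw [hK₁, Finset.sum_insert hZA]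
  have hsum2 : ∑ C ∈ G.comps Finset.univ W₂ᶜ, n C = n Y + ∑ C ∈ B, n C := by
    rw [hK₂, Finset.sum_insert hYB]
  have hsumK : ∑ C ∈ K, n C = (∑ C ∈ A, n C) + (∑ C ∈ B, n C) + ∑ C ∈ Tc, n C := by
    have h1 := Finset.sum_filter_add_sum_filter_not K (fun C => G.valBtw C W₂ = 0) n
    have h2 := Finset.sum_filter_add_sum_filter_not
      (K.filter (fun C => ¬ G.valBtw C W₂ = 0)) (fun C => G.valBtw C W₁ = 0) n
    rw [Finset.filter_filter, Finset.filter_filter] at h2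
    have hBeq : K.filter (fun C => ¬ G.valBtw C W₂ = 0 ∧ G.valBtw C W₁ = 0) = B := by
      rw [hBdef]
      ext C
      simp only [Finset.mem_filter]
      constructor
      · rintro ⟨hK', _, h⟩; exact ⟨hK', h⟩
      · rintro ⟨hK', h⟩
        refine ⟨hK', ?_, h⟩
        rcases hdich C hK' with hh | hh
        · exact absurd h hh
        · exact hh
    have hTceq : K.filter (fun C => ¬ G.valBtw C W₂ = 0 ∧ ¬ G.valBtw C W₁ = 0) = Tc := by
      rw [hTdef]
      ext C
      simp only [Finset.mem_filter]
      exact ⟨fun ⟨a, b, c⟩ => ⟨a, c, b⟩, fun ⟨a, b, c⟩ => ⟨a, c, b⟩⟩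
    rw [hBeq, hTceq] at h2
    rw [hAdef]
    linarith
  have hdisjW₁Uc : Disjoint W₁ (W₁ ∪ W₂)ᶜ := by
    rw [Finset.disjoint_left]
    intro a ha1 ha2
    exact Finset.mem_compl.mp ha2 (Finset.mem_union_left _ ha1)
  have hdisjW₂Uc : Disjoint W₂ (W₁ ∪ W₂)ᶜ := by
    rw [Finset.disjoint_left]
    intro a ha1 ha2
    exact Finset.mem_compl.mp ha2 (Finset.mem_union_right _ ha1)
  have hW₁c : W₁ᶜ = W₂ ∪ (W₁ ∪ W₂)ᶜ := by
    ext v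
    simp only [Finset.mem_compl, Finset.mem_union]
    constructor
    · intro hv
      by_cases h2 : v ∈ W₂
      · exact Or.inl h2
      · exact Or.inr (fun h => h.elim hv h2)
    · rintro (hv | hv)
      · exact fun h => Finset.disjoint_left.mp hdisj h hv
      · exact fun h => hv (Or.inl h)
  have hW₂c : W₂ᶜ = W₁ ∪ (W₁ ∪ W₂)ᶜ := by
    ext v
    simp only [Finset.mem_compl, Finset.mem_union]
    constructor
    · intro hv
      by_cases h1 : v ∈ W₁
      · exact Or.inl h1
      · exact Or.inr (fun h => h.elim h1 hv)
    · rintro (hv | hv)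
      · exact fun h => Finset.disjoint_left.mp hdisj hv h
      · exact fun h => hv (Or.inr h)
  have hv1 : G.valOf W₁ = G.valBtw W₁ W₂ + G.valBtw W₁ (W₁ ∪ W₂)ᶜ := by
    unfold Multigraph.valOf
    rw [hW₁c, Multigraph.valBtw_union_right hdisj hdisjW₁Uc hdisjW₂Uc]
  have hv2 : G.valOf W₂ = G.valBtw W₁ W₂ + G.valBtw W₂ (W₁ ∪ W₂)ᶜ := by
    unfold Multigraph.valOf
    rw [hW₂c, Multigraph.valBtw_union_right hdisj.symm hdisjW₂Uc hdisjW₁Uc,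
      Multigraph.valBtw_comm W₂ W₁]
  have hvU : G.valOf (W₁ ∪ W₂) = G.valBtw W₁ (W₁ ∪ W₂)ᶜ + G.valBtw W₂ (W₁ ∪ W₂)ᶜ := by
    unfold Multigraph.valOf
    rw [Multigraph.valBtw_comm,
      Multigraph.valBtw_union_right hdisjW₁Uc.symm hdisjW₂Uc.symm hdisj,
      Multigraph.valBtw_comm _ W₁, Multigraph.valBtw_comm _ W₂]
  have hv1' : (G.valOf W₁ : ℤ)
      = (G.valBtw W₁ W₂ : ℤ) + (G.valBtw W₁ (W₁ ∪ W₂)ᶜ : ℤ) := by exact_mod_cast hv1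
  have hv2' : (G.valOf W₂ : ℤ)
      = (G.valBtw W₁ W₂ : ℤ) + (G.valBtw W₂ (W₁ ∪ W₂)ᶜ : ℤ) := by exact_mod_cast hv2
  have hvU' : (G.valOf (W₁ ∪ W₂) : ℤ)
      = (G.valBtw W₁ (W₁ ∪ W₂)ᶜ : ℤ) + (G.valBtw W₂ (W₁ ∪ W₂)ᶜ : ℤ) := by exact_mod_cast hvU
  rw [hext (W₁ ∪ W₂) hUconn hUD, hext W₁ hW1conn hW1D, hext W₂ hW2conn hW2D, ← hKdef]
  linarith [hsum1, hsum2, hsumK, hstar, hv1', hv2', hvU']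
end
end

section
/- Let 𝔫 be a V-stability condition of degree d on a finite connected multigraph Γ and let f : Γ → Γ' be a morphism of graphs. Then the function f_*(𝔫) on BCon(Γ') defined by f_*(𝔫)_Z := 𝔫_{f_V^{−1}(Z)} is a V-stability condition of degree d on Γ'; its degeneracy subset is 𝒟(f_*(𝔫)) = {Z ∈ BCon(Γ') : f_V^{−1}(Z) is 𝔫-degenerate}; its extended degeneracy subset is {Z ∈ Con(Γ') : f_V^{−1}(Z) ∈ 𝒟̂(𝔫)}; and its extended V-function satisfies f_*(𝔫)_Z = 𝔫_{f_V^{−1}(Z)} for every subset Z ⊆ V(Γ'). -/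
noncomputable section

attribute [local instance 10] Classical.propDecidable

set_option linter.unusedSectionVars false

namespace Multigraph

namespace Hom

variable {V E V' E' : Type}
variable [Fintype V] [DecidableEq V] [Fintype E] [DecidableEq E]
variable [Fintype V'] [DecidableEq V'] [Fintype E'] [DecidableEq E']
variable {G : Multigraph V E} {G' : Multigraph V' E'}
variable (f : G.Hom G')

lemma mem_preV {v : V} {Z : Finset V'} : v ∈ f.preV Z ↔ f.fV v ∈ Z := by
  simp [Hom.preV]

lemma fV_surjective : Function.Surjective f.fV := by
  intro v'
  obtain ⟨v, hv⟩ := (f.fibers v').1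
  exact ⟨v, (Finset.mem_filter.mp hv).2⟩

lemma preV_injective : Function.Injective f.preV := by
  intro Z₁ Z₂ h
  ext z'
  obtain ⟨v, rfl⟩ := f.fV_surjective z'
  rw [← f.mem_preV, ← f.mem_preV, h]

lemma preV_compl (Z : Finset V') : f.preV Zᶜ = (f.preV Z)ᶜ := by
  ext v; simp [mem_preV]

lemma preV_union (Z₁ Z₂ : Finset V') : f.preV (Z₁ ∪ Z₂) = f.preV Z₁ ∪ f.preV Z₂ := by
  ext v; simp [mem_preV]

lemma preV_univ : f.preV Finset.univ = Finset.univ := by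
  ext v; simp [mem_preV]

lemma preV_disjoint {Z₁ Z₂ : Finset V'} (h : Disjoint Z₁ Z₂) :
    Disjoint (f.preV Z₁) (f.preV Z₂) := by
  rw [Finset.disjoint_left] at h ⊢
  intro a ha hb
  exact h (f.mem_preV.mp ha) (f.mem_preV.mp hb)

lemma linked_fiber {Z : Finset V'} {u w : V} (h : f.fV u = f.fV w)
    (hu : f.fV u ∈ Z) : G.Linked Finset.univ (f.preV Z) u w := by
  have hc := f.fibers (f.fV u)
  have hl := hc.2 u (by simp) w (by simp [h.symm])
  refine Relation.ReflTransGen.mono ?_ _ _ hl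
  rintro a b ⟨ha, hb, e, _, hor⟩
  refine ⟨?_, ?_, e, Finset.mem_univ e, hor⟩
  · rw [mem_preV, (Finset.mem_filter.mp ha).2]; exact hu
  · rw [mem_preV, (Finset.mem_filter.mp hb).2]; exact hu

lemma linked_push {Z : Finset V'} {u w : V}
    (h : G.Linked Finset.univ (f.preV Z) u w) :
    G'.Linked Finset.univ Z (f.fV u) (f.fV w) := by
  induction h with
  | refl => exact Relation.ReflTransGen.refl
  | @tail b c _ hbc ih =>
    obtain ⟨hb, hc, e, _, hor⟩ := hbc
    by_cases he : ∃ e', f.fE e' = e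
    · obtain ⟨e', rfl⟩ := he
      refine ih.tail ⟨f.mem_preV.mp hb, f.mem_preV.mp hc, e', Finset.mem_univ e', ?_⟩
      rcases f.ends e' with ⟨h1, h2⟩ | ⟨h1, h2⟩ <;> rcases hor with ⟨hs, ht⟩ | ⟨hs, ht⟩
      · exact Or.inl ⟨by rw [← h1, hs], by rw [← h2, ht]⟩
      · exact Or.inr ⟨by rw [← h1, hs], by rw [← h2, ht]⟩
      · exact Or.inr ⟨by rw [← h2, ht], by rw [← h1, hs]⟩
      · exact Or.inl ⟨by rw [← h2, ht], by rw [← h1, hs]⟩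
    · push_neg at he
      have hco := f.contr e he
      have hbc' : f.fV b = f.fV c := by
        rcases hor with ⟨hs, ht⟩ | ⟨hs, ht⟩
        · rw [← hs, ← ht]; exact hco
        · rw [← hs, ← ht]; exact hco.symm
      rw [← hbc']; exact ih

lemma linked_lift {Z : Finset V'} {a' b' : V'} (h : G'.Linked Finset.univ Z a' b')
    (ha : a' ∈ Z) :
    ∀ u w : V, f.fV u = a' → f.fV w = b' → G.Linked Finset.univ (f.preV Z) u w := by
  induction h with
  | refl =>
    intro u w hu hw
    exact f.linked_fiber (by rw [hu, hw]) (by rw [hu]; exact ha)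
  | @tail c' d' _ hstep ih =>
    intro u w hu hw
    obtain ⟨hcZ, hdZ, e', _, hor⟩ := hstep
    obtain ⟨x, y, hx, hy, hxy⟩ :
        ∃ x y, f.fV x = c' ∧ f.fV y = d' ∧
          ((G.src (f.fE e') = x ∧ G.tgt (f.fE e') = y) ∨
           (G.src (f.fE e') = y ∧ G.tgt (f.fE e') = x)) := by
      rcases f.ends e' with ⟨h1, h2⟩ | ⟨h1, h2⟩ <;> rcases hor with ⟨hs, ht⟩ | ⟨hs, ht⟩
      · exact ⟨_, _, h1.trans hs, h2.trans ht, Or.inl ⟨rfl, rfl⟩⟩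
      · exact ⟨_, _, h2.trans ht, h1.trans hs, Or.inr ⟨rfl, rfl⟩⟩
      · exact ⟨_, _, h2.trans hs, h1.trans ht, Or.inr ⟨rfl, rfl⟩⟩
      · exact ⟨_, _, h1.trans ht, h2.trans hs, Or.inl ⟨rfl, rfl⟩⟩
    have h1 : G.Linked Finset.univ (f.preV Z) u x := ih u x hu hx
    have h2 : G.Step Finset.univ (f.preV Z) x y :=
      ⟨f.mem_preV.mpr (by rw [hx]; exact hcZ), f.mem_preV.mpr (by rw [hy]; exact hdZ),
        f.fE e', Finset.mem_univ _, hxy⟩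
    have h3 : G.Linked Finset.univ (f.preV Z) y w :=
      f.linked_fiber (by rw [hy, hw]) (by rw [hy]; exact hdZ)
    exact (h1.tail h2).trans h3

lemma isConn_preV {Z : Finset V'} :
    G.IsConn Finset.univ (f.preV Z) ↔ G'.IsConn Finset.univ Z := by
  constructor
  · rintro ⟨⟨v, hv⟩, hlink⟩
    refine ⟨⟨f.fV v, f.mem_preV.mp hv⟩, ?_⟩
    intro a' ha b' hb
    obtain ⟨a, rfl⟩ := f.fV_surjective a'
    obtain ⟨b, rfl⟩ := f.fV_surjective b'
    exact f.linked_push (hlink a (f.mem_preV.mpr ha) b (f.mem_preV.mpr hb))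
  · rintro ⟨⟨z, hz⟩, hlink⟩
    obtain ⟨v, hv⟩ := f.fV_surjective z
    refine ⟨⟨v, f.mem_preV.mpr (by rw [hv]; exact hz)⟩, ?_⟩
    intro a ha b hb
    exact f.linked_lift (hlink _ (f.mem_preV.mp ha) _ (f.mem_preV.mp hb))
      (f.mem_preV.mp ha) a b rfl rfl

lemma valBtw_preV {Z₁ Z₂ : Finset V'} (hd : Disjoint Z₁ Z₂) :
    G'.valBtw Z₁ Z₂ = G.valBtw (f.preV Z₁) (f.preV Z₂) := by
  unfold valBtw valBtwIn
  apply Finset.card_bij (fun e' _ => f.fE e')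
  · intro e' he'
    simp only [Finset.mem_filter, Finset.mem_univ, true_and, mem_preV] at he' ⊢
    rcases f.ends e' with ⟨h1, h2⟩ | ⟨h1, h2⟩ <;> rw [h1, h2] <;> tauto
  · intro a _ b _ h; exact f.fE_inj h
  · intro e he
    simp only [Finset.mem_filter, Finset.mem_univ, true_and, mem_preV] at he
    have hnc : ∃ e', f.fE e' = e := by
      by_contra hno
      push_neg at hno
      have hco := f.contr e hno
      rw [Finset.disjoint_left] at hd
      rcases he with ⟨hs, ht⟩ | ⟨hs, ht⟩
      · exact hd hs (hco ▸ ht)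
      · exact hd (hco ▸ ht) hs
    obtain ⟨e', rfl⟩ := hnc
    refine ⟨e', ?_, rfl⟩
    simp only [Finset.mem_filter, Finset.mem_univ, true_and]
    rcases f.ends e' with ⟨h1, h2⟩ | ⟨h1, h2⟩ <;> rw [← h1, ← h2] <;> tauto

lemma valOf_preV (Z : Finset V') : G'.valOf Z = G.valOf (f.preV Z) := by
  unfold valOf
  rw [f.valBtw_preV disjoint_compl_right, f.preV_compl]

lemma bcon_preV {Z : Finset V'} : Z ∈ G'.BCon ↔ f.preV Z ∈ G.BCon := by
  unfold BCon
  simp only [Set.mem_setOf_eq]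
  rw [← f.isConn_preV, ← f.isConn_preV, f.preV_compl]

lemma con_preV {Z : Finset V'} : Z ∈ G'.Con ↔ f.preV Z ∈ G.Con := by
  unfold Con
  simp only [Set.mem_setOf_eq]
  rw [← f.isConn_preV]

lemma degen_preV (n : Finset V → ℤ) (d : ℤ) (Z : Finset V') :
    G'.Degen (fun Z => n (f.preV Z)) d Z ↔ G.Degen n d (f.preV Z) := by
  show n (f.preV Z) + n (f.preV Zᶜ) + (G'.valOf Z : ℤ) - d = 0 ↔ _
  rw [f.valOf_preV, f.preV_compl]
  exact Iff.rfl

lemma inDeg_preV (n : Finset V → ℤ) (d : ℤ) (Z : Finset V') :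
    G'.InDeg (fun Z => n (f.preV Z)) d Z ↔ G.InDeg n d (f.preV Z) := by
  unfold InDeg
  rw [f.bcon_preV, f.degen_preV]

lemma triSum_preV (n : Finset V → ℤ) (d : ℤ) {W₁ W₂ W₃ : Finset V'}
    (h12 : Disjoint W₁ W₂) (h13 : Disjoint W₁ W₃) (h23 : Disjoint W₂ W₃) :
    G'.triSum (fun Z => n (f.preV Z)) d W₁ W₂ W₃ =
      G.triSum n d (f.preV W₁) (f.preV W₂) (f.preV W₃) := by
  unfold triSum
  rw [f.valBtw_preV h12, f.valBtw_preV h13, f.valBtw_preV h23]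

lemma comp_preV {W' : Finset V'} {v : V} (hv : f.fV v ∈ W') :
    G.comp Finset.univ (f.preV W') v = f.preV (G'.comp Finset.univ W' (f.fV v)) := by
  ext u
  simp only [comp, Finset.mem_filter, mem_preV]
  constructor
  · rintro ⟨hu, hl⟩
    exact ⟨hu, f.linked_push hl⟩
  · rintro ⟨hu, hl⟩
    exact ⟨hu, f.linked_lift hl hv v u rfl rfl⟩

lemma comps_preV (W' : Finset V') :
    G.comps Finset.univ (f.preV W') = (G'.comps Finset.univ W').image f.preV := by
  unfold comps
  rw [Finset.image_image]
  apply Finset.Subset.antisymm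
  · intro C hC
    obtain ⟨v, hv, rfl⟩ := Finset.mem_image.mp hC
    exact Finset.mem_image.mpr ⟨f.fV v, f.mem_preV.mp hv,
      (f.comp_preV (f.mem_preV.mp hv)).symm⟩
  · intro C hC
    obtain ⟨z, hz, rfl⟩ := Finset.mem_image.mp hC
    obtain ⟨v, rfl⟩ := f.fV_surjective z
    exact Finset.mem_image.mpr ⟨v, f.mem_preV.mpr hz, f.comp_preV hz⟩

lemma connVal_preV (n : Finset V → ℤ) (d : ℤ) (Z : Finset V') :
    G'.connVal (fun Z => n (f.preV Z)) d Z = G.connVal n d (f.preV Z) := by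
  unfold connVal
  rw [f.valOf_preV, ← f.preV_compl, f.comps_preV,
    Finset.sum_image (fun a _ b _ h => f.preV_injective h)]
  congr 2
  rw [Finset.filter_image,
    Finset.card_image_of_injective _ f.preV_injective]
  apply Finset.card_nbij id
  · intro a ha
    simp only [Finset.mem_coe, Finset.mem_filter] at ha ⊢
    exact ⟨ha.1, fun hc => ha.2 ((f.inDeg_preV n d a).mpr hc)⟩
  · exact Function.injective_id.injOn
  · intro a ha
    simp only [Finset.coe_filter, Set.mem_setOf_eq] at ha ⊢
    exact ⟨a, ⟨ha.1, fun hc => ha.2 ((f.inDeg_preV n d a).mp hc)⟩, rfl⟩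

lemma extendV_preV (n : Finset V → ℤ) (d : ℤ) (Z : Finset V') :
    G'.extendV (fun Z => n (f.preV Z)) d Z = G.extendV n d (f.preV Z) := by
  unfold extendV
  rw [f.comps_preV, Finset.sum_image (fun a _ b _ h => f.preV_injective h)]
  exact Finset.sum_congr rfl (fun C _ => f.connVal_preV n d C)

end Hom
end Multigraph

/-- the push-forward `f_*(𝔫)`, defined by `f_*(𝔫)_Z := 𝔫_{f_V⁻¹(Z)}`,
of a V-stability condition of degree `d` along a morphism of graphs `f : Γ → Γ'` is a
V-stability condition of degree `d` on `Γ'`; its degeneracy subset consists of the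
`Z ∈ BCon(Γ')` with `f_V⁻¹(Z)` `𝔫`-degenerate; its extended degeneracy subset is
`{Z ∈ Con(Γ') : f_V⁻¹(Z) ∈ 𝒟̂(𝔫)}`; and its extended V-function satisfies
`f_*(𝔫)_Z = 𝔫_{f_V⁻¹(Z)}` for every subset `Z ⊆ V(Γ')`. -/
theorem pushforward_VStab
    {V E V' E' : Type} [Fintype V] [DecidableEq V] [Fintype E] [DecidableEq E]
    [Fintype V'] [DecidableEq V'] [Fintype E'] [DecidableEq E']
    (G : Multigraph V E) (G' : Multigraph V' E')
    (hG : G.IsConn Finset.univ Finset.univ)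
    (d : ℤ) (n : Finset V → ℤ) (hn : G.IsVStab d n) (f : G.Hom G') :
    G'.IsVStab d (fun Z => n (f.preV Z)) ∧
    ({Z | G'.InDeg (fun Z => n (f.preV Z)) d Z} =
      {Z | Z ∈ G'.BCon ∧ G.Degen n d (f.preV Z)}) ∧
    (G'.ExtDeg (fun Z => n (f.preV Z)) d =
      {Z | Z ∈ G'.Con ∧ f.preV Z ∈ G.ExtDeg n d}) ∧
    (∀ Z : Finset V', G'.extendV (fun Z => n (f.preV Z)) d Z =
      G.extendV n d (f.preV Z)) := by

  refine ⟨?_, ?_, ?_, ?_⟩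
  · constructor
    · intro Z hZ
      show n (f.preV Z) + n (f.preV Zᶜ) + (G'.valOf Z : ℤ) - d = 0 ∨
        n (f.preV Z) + n (f.preV Zᶜ) + (G'.valOf Z : ℤ) - d = 1
      rw [f.valOf_preV, f.preV_compl]
      exact hn.one _ (f.bcon_preV.mp hZ)
    · intro W₁ W₂ W₃ h1 h2 h3 d12 d13 d23 huniv
      have key := hn.two_deg _ _ _ (f.bcon_preV.mp h1) (f.bcon_preV.mp h2)
        (f.bcon_preV.mp h3) (f.preV_disjoint d12) (f.preV_disjoint d13)
        (f.preV_disjoint d23)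
        (by rw [← f.preV_union, ← f.preV_union, huniv, f.preV_univ])
      simp only [f.degen_preV]
      exact key
    · intro W₁ W₂ W₃ h1 h2 h3 d12 d13 d23 huniv
      have key := hn.two_sum _ _ _ (f.bcon_preV.mp h1) (f.bcon_preV.mp h2)
        (f.bcon_preV.mp h3) (f.preV_disjoint d12) (f.preV_disjoint d13)
        (f.preV_disjoint d23)
        (by rw [← f.preV_union, ← f.preV_union, huniv, f.preV_univ])
      simp only [f.degen_preV, f.triSum_preV n d d12 d13 d23]
      exact key
  · ext Z
    simp only [Set.mem_setOf_eq, Multigraph.InDeg, f.degen_preV]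
  · ext Z
    simp only [Multigraph.ExtDeg, Multigraph.ExtOf, Set.mem_setOf_eq]
    constructor
    · rintro (rfl | ⟨hcon, hall⟩)
      · refine ⟨f.isConn_preV.mp (by rw [f.preV_univ]; exact hG), Or.inl f.preV_univ⟩
      · refine ⟨hcon, Or.inr ⟨f.con_preV.mp hcon, ?_⟩⟩
        intro C hC
        rw [← f.preV_compl, f.comps_preV] at hC
        obtain ⟨C', hC', rfl⟩ := Finset.mem_image.mp hC
        exact (f.inDeg_preV n d C').mp (hall C' hC')
    · rintro ⟨hcon, (hU | ⟨_, hall⟩)⟩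
      · exact Or.inl (f.preV_injective (by rw [hU, f.preV_univ]))
      · refine Or.inr ⟨hcon, ?_⟩
        intro C' hC'
        refine (f.inDeg_preV n d C').mpr (hall (f.preV C') ?_)
        rw [← f.preV_compl, f.comps_preV]
        exact Finset.mem_image.mpr ⟨C', hC', rfl⟩
  · exact fun Z => f.extendV_preV n d Z
end
end

section
/- Let 𝔫 be a V-stability condition of degree d on a finite connected multigraph Γ and let f : Γ → Γ' be a morphism of graphs. Then the push-forward map f_* : 𝕆^d(Γ) → 𝕆^d(Γ') maps the semistable set 𝒫_𝔫 into the semistable set 𝒫_{f_*(𝔫)}, where f_*(𝔫) is the push-forward V-stability condition defined by f_*(𝔫)_Z := 𝔫_{f_V^{−1}(Z)} for Z ∈ BCon(Γ'). -/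
noncomputable section

attribute [local instance 10] Classical.propDecidable

namespace Multigraph

variable {V E V' E' : Type}
variable [Fintype V] [DecidableEq V] [Fintype E] [DecidableEq E]
variable [Fintype V'] [DecidableEq V'] [Fintype E'] [DecidableEq E']
variable (G : Multigraph V E) (G' : Multigraph V' E')

variable {G G'}

-- ===== auxiliary lemmas for pushforward_semistable =====

lemma linked_mono_aux {T T' : Finset E} {W W' : Finset V} (hT : T ⊆ T') (hW : W ⊆ W')
    {a b : V} (h : G.Linked T W a b) : G.Linked T' W' a b := by
  induction h with
  | refl => exact Relation.ReflTransGen.refl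
  | tail _ hstep ih =>
      obtain ⟨h1, h2, e, heT, he⟩ := hstep
      exact ih.tail ⟨hW h1, hW h2, e, hT heT, he⟩

lemma mem_preV_aux {f : G.Hom G'} {Z : Finset V'} {v : V} :
    v ∈ f.preV Z ↔ f.fV v ∈ Z := by simp [Hom.preV]

lemma fiber_linked_aux (f : G.Hom G') {Z : Finset V'} {v' : V'} (hv' : v' ∈ Z)
    {a b : V} (ha : f.fV a = v') (hb : f.fV b = v') :
    G.Linked Finset.univ (f.preV Z) a b := by
  have h := (f.fibers v').2 a (by simp [ha]) b (by simp [hb])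
  refine linked_mono_aux (Finset.subset_univ _) ?_ h
  intro x hx
  simp only [Finset.mem_filter, Finset.mem_univ, true_and] at hx
  exact mem_preV_aux.mpr (hx ▸ hv')

lemma preV_isConn_aux (f : G.Hom G') {Z : Finset V'} (hZ : G'.IsConn Finset.univ Z) :
    G.IsConn Finset.univ (f.preV Z) := by
  obtain ⟨⟨z, hz⟩, hconn⟩ := hZ
  have key : ∀ u' w' : V', G'.Linked Finset.univ Z u' w' → u' ∈ Z →
      ∀ x y : V, f.fV x = u' → f.fV y = w' → G.Linked Finset.univ (f.preV Z) x y := by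
    intro u' w' h
    induction h with
    | refl => intro hu x y hx hy; exact fiber_linked_aux f hu hx hy
    | @tail c' w' _ hstep ih =>
        intro hu x y hx hy
        obtain ⟨hc, hw, e', _, hends⟩ := hstep
        have hst : (f.fV (G.src (f.fE e')) = c' ∧ f.fV (G.tgt (f.fE e')) = w') ∨
            (f.fV (G.src (f.fE e')) = w' ∧ f.fV (G.tgt (f.fE e')) = c') := by
          rcases f.ends e' with ⟨h1, h2⟩ | ⟨h1, h2⟩ <;>
            rcases hends with ⟨h3, h4⟩ | ⟨h3, h4⟩
          · exact Or.inl ⟨h1.trans h3, h2.trans h4⟩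
          · exact Or.inr ⟨h1.trans h3, h2.trans h4⟩
          · exact Or.inr ⟨h1.trans h4, h2.trans h3⟩
          · exact Or.inl ⟨h1.trans h4, h2.trans h3⟩
        rcases hst with ⟨h1, h2⟩ | ⟨h1, h2⟩
        · have step : G.Step Finset.univ (f.preV Z) (G.src (f.fE e')) (G.tgt (f.fE e')) :=
            ⟨mem_preV_aux.mpr (by rw [h1]; exact hc),
             mem_preV_aux.mpr (by rw [h2]; exact hw),
             f.fE e', Finset.mem_univ _, Or.inl ⟨rfl, rfl⟩⟩
          exact ((ih hu x _ hx h1).tail step).trans (fiber_linked_aux f hw h2 hy)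
        · have step : G.Step Finset.univ (f.preV Z) (G.tgt (f.fE e')) (G.src (f.fE e')) :=
            ⟨mem_preV_aux.mpr (by rw [h2]; exact hc),
             mem_preV_aux.mpr (by rw [h1]; exact hw),
             f.fE e', Finset.mem_univ _, Or.inr ⟨rfl, rfl⟩⟩
          exact ((ih hu x _ hx h2).tail step).trans (fiber_linked_aux f hw h1 hy)
  constructor
  · obtain ⟨w, hw⟩ := (f.fibers z).1
    simp only [Finset.mem_filter, Finset.mem_univ, true_and] at hw
    exact ⟨w, mem_preV_aux.mpr (hw ▸ hz)⟩
  · intro a ha b hb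
    have ha' : f.fV a ∈ Z := mem_preV_aux.mp ha
    have hb' : f.fV b ∈ Z := mem_preV_aux.mp hb
    exact key _ _ (hconn _ ha' _ hb') ha' a b rfl rfl

lemma preV_bcon_aux (f : G.Hom G') {Z : Finset V'} (hZ : Z ∈ G'.BCon) :
    f.preV Z ∈ G.BCon := by
  refine ⟨preV_isConn_aux f hZ.1, ?_⟩
  have h : (f.preV Z)ᶜ = f.preV Zᶜ := by
    ext v; simp [Hom.preV]
  rw [h]; exact preV_isConn_aux f hZ.2

lemma preV_biUnion_aux (f : G.Hom G') (Z : Finset V') :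
    Z.biUnion (fun v' => f.preV {v'}) = f.preV Z := by
  ext v; simp [Hom.preV, eq_comm]

lemma sum_preV_aux (f : G.Hom G') (Dv : V → ℤ) (Z : Finset V') :
    ∑ v' ∈ Z, divSum Dv (f.preV {v'}) = divSum Dv (f.preV Z) := by
  unfold divSum
  rw [← preV_biUnion_aux f Z, Finset.sum_biUnion]
  intro x _ y _ hxy
  simp only [Function.onFun, Finset.disjoint_left, mem_preV_aux, Finset.mem_singleton]
  intro v hv hv'
  exact hxy (hv.symm.trans hv')

lemma eIn_contr_sum_aux (f : G.Hom G') {T : Finset E} (hT : T ⊆ f.contracted)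
    (Z : Finset V') :
    ∑ v' ∈ Z, G.eIn T (f.preV {v'}) = G.eIn T (f.preV Z) := by
  unfold eIn
  have h1 : (T.filter (fun e => G.src e ∈ f.preV Z ∧ G.tgt e ∈ f.preV Z)).card
      = ∑ v' ∈ Z, ((T.filter (fun e => G.src e ∈ f.preV Z ∧ G.tgt e ∈ f.preV Z)).filter
          (fun e => f.fV (G.src e) = v')).card := by
    apply Finset.card_eq_sum_card_fiberwise
    intro e he
    exact mem_preV_aux.mp (Finset.mem_filter.mp he).2.1
  rw [h1]
  apply Finset.sum_congr rfl
  intro v' hv'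
  rw [Finset.filter_filter]
  apply congrArg
  apply Finset.filter_congr
  intro e heT
  have hec : f.fV (G.src e) = f.fV (G.tgt e) := by
    have hm := hT heT
    simp only [Hom.contracted, Finset.mem_filter, Finset.mem_univ, true_and] at hm
    exact f.contr e hm
  simp only [mem_preV_aux, Finset.mem_singleton]
  constructor
  · rintro ⟨hs, ht⟩
    exact ⟨⟨by rw [hs]; exact hv', by rw [ht]; exact hv'⟩, hs⟩
  · rintro ⟨⟨_, _⟩, h⟩
    exact ⟨h, hec.symm.trans h⟩

lemma eIn_noncontr_aux (f : G.Hom G') (p : Finset E × (V → ℤ)) (Z : Finset V') :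
    G'.eIn (f.pushO p).1 Z = G.eIn (p.1 \ f.contracted) (f.preV Z) := by
  unfold eIn Hom.pushO
  apply Finset.card_bij (fun e' _ => f.fE e')
  · intro e' he'
    simp only [Finset.mem_filter, Finset.mem_univ, true_and] at he'
    obtain ⟨hS, hsrc, htgt⟩ := he'
    simp only [Finset.mem_filter, Finset.mem_sdiff, mem_preV_aux]
    refine ⟨⟨hS, ?_⟩, ?_, ?_⟩
    · simp only [Hom.contracted, Finset.mem_filter, Finset.mem_univ, true_and]
      push_neg
      exact ⟨e', rfl⟩
    · rcases f.ends e' with ⟨h1, _⟩ | ⟨h1, _⟩ <;> rw [h1]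
      exacts [hsrc, htgt]
    · rcases f.ends e' with ⟨_, h2⟩ | ⟨_, h2⟩ <;> rw [h2]
      exacts [htgt, hsrc]
  · intro a _ b _ hab
    exact f.fE_inj hab
  · intro e he
    simp only [Finset.mem_filter, Finset.mem_sdiff, mem_preV_aux] at he
    obtain ⟨⟨hS, hnc⟩, hsrc, htgt⟩ := he
    simp only [Hom.contracted, Finset.mem_filter, Finset.mem_univ, true_and] at hnc
    push_neg at hnc
    obtain ⟨e', he'⟩ := hnc
    refine ⟨e', ?_, he'⟩
    simp only [Finset.mem_filter, Finset.mem_univ, true_and]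
    refine ⟨by rw [he']; exact hS, ?_, ?_⟩
    · rcases f.ends e' with ⟨h1, _⟩ | ⟨_, h2⟩
      · rw [← h1, he']; exact hsrc
      · rw [← h2, he']; exact htgt
    · rcases f.ends e' with ⟨_, h2⟩ | ⟨h1, _⟩
      · rw [← h2, he']; exact htgt
      · rw [← h1, he']; exact hsrc

lemma eIn_split_aux (S C : Finset E) (W : Finset V) :
    G.eIn (S ∩ C) W + G.eIn (S \ C) W = G.eIn S W := by
  unfold eIn
  rw [← Finset.card_union_of_disjoint, ← Finset.filter_union]
  · congr 1
    ext e
    simp only [Finset.mem_filter, Finset.mem_union, Finset.mem_inter, Finset.mem_sdiff]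
    tauto
  · rw [Finset.disjoint_left]
    intro a ha hb
    simp only [Finset.mem_filter, Finset.mem_inter, Finset.mem_sdiff] at ha hb
    exact hb.1.2 ha.1.2

lemma push_sum_aux (f : G.Hom G') (p : Finset E × (V → ℤ)) (Z : Finset V') :
    divSum (f.pushO p).2 Z + ((G'.eIn (f.pushO p).1 Z : ℤ)) =
      divSum p.2 (f.preV Z) + (G.eIn p.1 (f.preV Z) : ℤ) := by
  have hb := eIn_contr_sum_aux f
    (show p.1 ∩ f.contracted ⊆ f.contracted from Finset.inter_subset_right) Z
  have hc := eIn_noncontr_aux f p Z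
  have hd := eIn_split_aux (G := G) p.1 f.contracted (f.preV Z)
  have ha := sum_preV_aux f p.2 Z
  have key2 : ∑ v' ∈ Z, (G.eIn (p.1 ∩ f.contracted) (f.preV {v'}) : ℤ)
      = (G.eIn (p.1 ∩ f.contracted) (f.preV Z) : ℤ) := by
    rw [← Nat.cast_sum, hb]
  have key1 : divSum (f.pushO p).2 Z
      = divSum p.2 (f.preV Z) + (G.eIn (p.1 ∩ f.contracted) (f.preV Z) : ℤ) := by
    show ∑ v' ∈ Z, (divSum p.2 (f.preV {v'})
        + (G.eIn (p.1 ∩ f.contracted) (f.preV {v'}) : ℤ)) = _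
    rw [Finset.sum_add_distrib, ha, key2]
  rw [key1, hc, ← hd]
  push_cast
  ring

lemma eIn_univ_aux (T : Finset E) : G.eIn T Finset.univ = T.card := by
  unfold eIn
  rw [Finset.filter_true_of_mem]
  intro e _; simp

lemma preV_univ_aux (f : G.Hom G') : f.preV (Finset.univ) = Finset.univ := by
  ext v; simp [Hom.preV]


end Multigraph

/-- the push-forward map `f_* : 𝕆^d(Γ) → 𝕆^d(Γ')` along a morphism of
graphs `f : Γ → Γ'` maps the semistable set `𝒫_𝔫` into the semistable set of the
push-forward V-stability condition `f_*(𝔫)`, defined by `f_*(𝔫)_Z := 𝔫_{f_V⁻¹(Z)}`. -/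
theorem pushforward_semistable
    {V E V' E' : Type} [Fintype V] [DecidableEq V] [Fintype E] [DecidableEq E]
    [Fintype V'] [DecidableEq V'] [Fintype E'] [DecidableEq E']
    (G : Multigraph V E) (G' : Multigraph V' E')
    (hG : G.IsConn Finset.univ Finset.univ)
    (d : ℤ) (n : Finset V → ℤ) (hn : G.IsVStab d n) (f : G.Hom G') :
    ∀ p ∈ G.Pss n d, f.pushO p ∈ G'.Pss (fun Z => n (f.preV Z)) d := by
  intro p hp
  obtain ⟨hdeg, hss⟩ := hp
  have hdeg' : divSum p.2 Finset.univ = d - (p.1.card : ℤ) := hdeg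
  constructor
  · have h := Multigraph.push_sum_aux f p Finset.univ
    rw [Multigraph.preV_univ_aux, Multigraph.eIn_univ_aux, Multigraph.eIn_univ_aux] at h
    show divSum (f.pushO p).2 Finset.univ = d - ((f.pushO p).1.card : ℤ)
    linarith
  · intro Z hZ
    have h := Multigraph.push_sum_aux f p Z
    have h2 := hss (f.preV Z) (Multigraph.preV_bcon_aux f hZ)
    show n (f.preV Z) ≤ _
    linarith
end
end
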